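/- arXiv:math/0412219 — 7 statements merged into one kernel-verified Lean document; each statement's English description precedes it below -/
import Mathlib

section
/- For every integer n ≥ 2 and every finite symmetric generating set Σ of the free abelian group ℤⁿ (with Σ = −Σ and 0 ∉ Σ), the metric space (ℤⁿ, d_Σ), where d_Σ is the word metric associated to Σ, has roundness exactly 1. In other words, the roundness spectrum of ℤⁿ is {1}. -/
/-- The set of exponents `q ≥ 1` for which the roundness inequality holds for all
quadruples of points, with respect to the distance function `d`. -/
noncomputable def roundnessSet {X : Type*} (d : X → X → ℝ) : Set ℝ :=
  {q : ℝ | 1 ≤ q ∧ ∀ x00 x01 x10 x11 : X,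
    d x00 x11 ^ q + d x01 x10 ^ q ≤
      d x00 x01 ^ q + d x00 x10 ^ q + d x11 x01 ^ q + d x11 x10 ^ q}

/-- The roundness of a distance function `d` on `X`: the supremum (in `EReal`) of all
exponents `q ≥ 1` for which the roundness inequality holds for all quadruples. -/
noncomputable def roundness {X : Type*} (d : X → X → ℝ) : EReal :=
  sSup ((fun q : ℝ => (q : EReal)) '' roundnessSet d)
/-- The word length of `g` in an additive group with respect to a generating set `S`:
the least `n` such that `g` is a sum of `n` elements of `S`. -/
noncomputable def addWordLength {G : Type*} [AddGroup G] (S : Set G) (g : G) : ℕ :=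
  sInf {n : ℕ | ∃ l : List G, l.length = n ∧ (∀ x ∈ l, x ∈ S) ∧ l.sum = g}

/-- The word metric on an additive group `G` associated to a generating set `S`. -/
noncomputable def addWordDist {G : Type*} [AddGroup G] (S : Set G) (g h : G) : ℝ :=
  addWordLength S (-g + h)

/-!
An additive functional that is at most `1` on the generators is a lower bound for the word length.
Embed `ℤⁿ` in `ℝⁿ` and pick an edge of the polytope spanned by `Σ`: generators `a`, `b` and
functionals `f, g ≤ 1` on `Σ` with `f a = f b = 1` and `g a = 1 > g b`. It exists because for
`n ≥ 2` the set `Σ` does not lie on a line: let `a` be a generator of maximal Euclidean norm, `g` its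
support functional, and tilt `g` about `a` until it meets a second generator `b`.
In the quadrilateral `0, k a, b, k a + b` the functionals force the diagonals to have lengths
`k + 1` and at least `k`, while the sides have lengths at most `k, 1, 1, k`. The roundness
inequality for `q > 1` would then give `(k + 1) ^ q ≤ k ^ q + 2`, which fails for large `k`.
-/

lemma AddSubmonoid.closure_eq_top_of_neg_mem {G : Type*} [AddGroup G] {S : Set G}
    (hsym : ∀ v ∈ S, -v ∈ S) (hgen : AddSubgroup.closure S = ⊤) :
    AddSubmonoid.closure S = ⊤ := by
  have : -S ⊆ S := fun x hx => by simpa using hsym _ hx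
  rw [← Set.union_eq_left.2 this, ← AddSubgroup.closure_toAddSubmonoid, hgen]
  rfl

section WordLength

variable {G : Type*} [AddGroup G] {S : Set G}

lemma addWordLength_sum_le {l : List G} (hl : ∀ x ∈ l, x ∈ S) :
    addWordLength S l.sum ≤ l.length :=
  Nat.sInf_le ⟨l, rfl, hl, rfl⟩

lemma addWordLength_nsmul_le {a : G} (ha : a ∈ S) (k : ℕ) : addWordLength S (k • a) ≤ k := by
  simpa using addWordLength_sum_le (S := S) (l := List.replicate k a)
    (fun x hx => List.eq_of_mem_replicate hx ▸ ha)

lemma exists_list_length_eq_addWordLength (hS : AddSubmonoid.closure S = ⊤) (x : G) :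
    ∃ l : List G, l.length = addWordLength S x ∧ (∀ y ∈ l, y ∈ S) ∧ l.sum = x := by
  refine Nat.sInf_mem (s := {n | ∃ l : List G, l.length = n ∧ (∀ y ∈ l, y ∈ S) ∧ l.sum = x}) ?_
  obtain ⟨l, hl, rfl⟩ := AddSubmonoid.exists_list_of_mem_closure (hS ▸ AddSubmonoid.mem_top x)
  exact ⟨l.length, l, rfl, hl, rfl⟩

lemma addWordLength_add_le (hS : AddSubmonoid.closure S = ⊤) (x y : G) :
    addWordLength S (x + y) ≤ addWordLength S x + addWordLength S y := by
  obtain ⟨l, hlx, hl, rfl⟩ := exists_list_length_eq_addWordLength hS x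
  obtain ⟨m, hmy, hm, rfl⟩ := exists_list_length_eq_addWordLength hS y
  rw [← hlx, ← hmy, ← List.length_append, ← List.sum_append]
  exact addWordLength_sum_le (by simpa [or_imp, forall_and] using And.intro hl hm)

lemma addWordLength_neg_le (hS : AddSubmonoid.closure S = ⊤) (hsym : ∀ v ∈ S, -v ∈ S) (x : G) :
    addWordLength S (-x) ≤ addWordLength S x := by
  obtain ⟨l, hlx, hl, rfl⟩ := exists_list_length_eq_addWordLength hS x
  rw [← hlx, List.sum_neg_reverse]
  simpa using addWordLength_sum_le (S := S) (l := (l.map (-·)).reverse)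
    (by simpa using fun y hy => by simpa using hsym (-y) (hl (-y) hy))

lemma le_addWordLength (hS : AddSubmonoid.closure S = ⊤) (f : G →+ ℝ) (hf : ∀ s ∈ S, f s ≤ 1)
    (x : G) : f x ≤ addWordLength S x := by
  obtain ⟨l, hlx, hl, rfl⟩ := exists_list_length_eq_addWordLength hS x
  rw [← hlx, map_list_sum]
  simpa using List.sum_le_card_nsmul (l.map f) 1 (by simpa using fun y hy => hf y (hl y hy))

lemma addWordDist_nonneg (x y : G) : 0 ≤ addWordDist S x y := Nat.cast_nonneg _

lemma addWordDist_comm (hS : AddSubmonoid.closure S = ⊤) (hsym : ∀ v ∈ S, -v ∈ S) (x y : G) :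
    addWordDist S x y = addWordDist S y x := by
  have key : ∀ x y : G, addWordDist S x y ≤ addWordDist S y x := fun x y => by
    simpa [addWordDist] using addWordLength_neg_le hS hsym (-y + x)
  exact (key x y).antisymm (key y x)

lemma addWordDist_triangle (hS : AddSubmonoid.closure S = ⊤) (x y z : G) :
    addWordDist S x z ≤ addWordDist S x y + addWordDist S y z := by
  simpa [addWordDist, add_assoc] using
    (Nat.cast_le (α := ℝ)).2 (addWordLength_add_le hS (-x + y) (-y + z))

end WordLength

lemma one_mem_roundnessSet {X : Type*} {d : X → X → ℝ} (hcomm : ∀ x y, d x y = d y x)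
    (htri : ∀ x y z, d x z ≤ d x y + d y z) : 1 ∈ roundnessSet d := by
  refine ⟨le_rfl, fun x00 x01 x10 x11 => ?_⟩
  simp only [Real.rpow_one]
  linarith [htri x00 x01 x11, htri x00 x10 x11, htri x01 x00 x10, htri x01 x11 x10,
    hcomm x01 x00, hcomm x01 x11, hcomm x10 x11]

lemma roundness_eq_one {X : Type*} {d : X → X → ℝ} (h1 : 1 ∈ roundnessSet d)
    (hle : ∀ q ∈ roundnessSet d, q ≤ 1) : roundness d = 1 := by
  have : roundnessSet d = {1} := Set.eq_singleton_iff_unique_mem.2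
    ⟨h1, fun q hq => (hle q hq).antisymm hq.1⟩
  rw [roundness, this, Set.image_singleton, sSup_singleton, EReal.coe_one]

lemma exists_nat_rpow_add_two_lt_rpow {q : ℝ} (hq : 1 < q) :
    ∃ k : ℕ, (k : ℝ) ^ q + 2 < ((k : ℝ) + 1) ^ q := by
  have hq' : 0 < q - 1 := sub_pos.2 hq
  obtain ⟨k, hk⟩ := ((tendsto_rpow_atTop hq').comp (Filter.tendsto_atTop_add_const_right _ 1
    tendsto_natCast_atTop_atTop)).eventually_gt_atTop 2 |>.exists
  refine ⟨k, ?_⟩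
  have hsplit : ∀ x : ℝ, 0 ≤ x → x ^ q = x ^ (q - 1) * x := fun x hx => by
    simpa using Real.rpow_add' hx (y := q - 1) (z := 1) (by linarith)
  have hmono : (k : ℝ) ^ (q - 1) ≤ ((k : ℝ) + 1) ^ (q - 1) := by gcongr; linarith
  rw [hsplit _ k.cast_nonneg, hsplit _ (by positivity)]
  simp only [Function.comp_apply] at hk
  nlinarith [k.cast_nonneg (α := ℝ)]

lemma le_one_of_mem_roundnessSet_addWordDist {G : Type*} [AddCommGroup G] {S : Set G}
    (hS : AddSubmonoid.closure S = ⊤) (hsym : ∀ v ∈ S, -v ∈ S) {a b : G} (ha : a ∈ S) (hb : b ∈ S) (f g : G →+ ℝ)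
    (hf : ∀ s ∈ S, f s ≤ 1) (hg : ∀ s ∈ S, g s ≤ 1) (hfa : f a = 1) (hfb : f b = 1)
    (hga : g a = 1) (hgb : g b < 1) {q : ℝ} (hq : q ∈ roundnessSet (addWordDist S)) :
    q ≤ 1 := by
  by_contra! hq1
  obtain ⟨k, hk⟩ := exists_nat_rpow_add_two_lt_rpow hq1
  have hneg_g : ∀ s ∈ S, (-g) s ≤ 1 := fun s hs => by simpa using hg (-s) (hsym s hs)
  have diag : (k : ℝ) + 1 ≤ addWordDist S 0 (k • a + b) := by
    simpa [addWordDist, hfa, hfb] using le_addWordLength hS f hf (k • a + b)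
  -- the word length of `-(k • a) + b` is an integer exceeding `k - 1`
  have antidiag : (k : ℝ) ≤ addWordDist S (k • a) b := by
    have h : (k : ℝ) - g b ≤ addWordLength S (-(k • a) + b) := by
      simpa [hga, sub_eq_neg_add] using le_addWordLength hS (-g) hneg_g (-(k • a) + b)
    have : k < addWordLength S (-(k • a) + b) + 1 := by
      exact_mod_cast (by linarith : (k : ℝ) < addWordLength S (-(k • a) + b) + 1)
    exact Nat.cast_le.2 (Nat.lt_succ_iff.1 this)
  have side_a : addWordDist S 0 (k • a) ≤ k := by
    simpa [addWordDist] using addWordLength_nsmul_le ha k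
  have side_b : addWordDist S 0 b ≤ 1 := by
    simpa [addWordDist] using addWordLength_nsmul_le hb 1
  have side_a' : addWordDist S (k • a + b) (k • a) ≤ 1 := by
    simpa [addWordDist] using addWordLength_nsmul_le (hsym b hb) 1
  have side_b' : addWordDist S (k • a + b) b ≤ k := by
    simpa [addWordDist, add_comm] using addWordLength_nsmul_le (hsym a ha) k
  have := calc ((k : ℝ) + 1) ^ q + (k : ℝ) ^ q
      ≤ addWordDist S 0 (k • a + b) ^ q + addWordDist S (k • a) b ^ q := by gcongr
    _ ≤ addWordDist S 0 (k • a) ^ q + addWordDist S 0 b ^ q +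
        addWordDist S (k • a + b) (k • a) ^ q + addWordDist S (k • a + b) b ^ q :=
      hq.2 0 (k • a) b (k • a + b)
    _ ≤ (k : ℝ) ^ q + 1 ^ q + 1 ^ q + (k : ℝ) ^ q := by
      gcongr <;> exact addWordDist_nonneg _ _
  rw [Real.one_rpow] at this
  linarith

lemma exists_add_mul_le_one_and_eq_one {α : Type*} {S : Set α} (hfin : S.Finite) (g h : α → ℝ)
    (hg : ∀ s ∈ S, g s ≤ 1) (hpos : ∃ s ∈ S, 0 < h s) :
    ∃ b ∈ S, 0 < h b ∧ ∃ t : ℝ, (∀ s ∈ S, g s + t * h s ≤ 1) ∧ g b + t * h b = 1 := by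
  obtain ⟨b, ⟨hbS, hb⟩, hmin⟩ := Set.exists_min_image {s ∈ S | 0 < h s}
    (fun s => (1 - g s) / h s) (hfin.subset fun _ hs => hs.1) hpos
  refine ⟨b, hbS, hb, (1 - g b) / h b, fun s hs => ?_, by field_simp; ring⟩
  rcases le_or_gt (h s) 0 with hs0 | hs0
  · nlinarith [div_nonneg (sub_nonneg.2 (hg b hbS)) hb.le, hg s hs]
  · have := hmin s ⟨hs, hs0⟩
    rw [div_le_div_iff₀ hb hs0] at this
    rw [div_mul_eq_mul_div, ← le_sub_iff_add_le', div_le_iff₀ hb]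
    linarith

section InnerProductSpace

open scoped RealInnerProductSpace

variable {E : Type*} [NormedAddCommGroup E] [InnerProductSpace ℝ E]

lemma real_inner_lt_norm_sq_of_norm_le_of_ne {a s : E} (hs : ‖s‖ ≤ ‖a‖) (hne : s ≠ a) :
    ⟪a, s⟫ < ‖a‖ ^ 2 := by
  have h := norm_sub_sq_real s a
  have : 0 < ‖s - a‖ := norm_pos_iff.2 (sub_ne_zero.2 hne)
  rw [real_inner_comm]
  nlinarith [norm_nonneg s]

lemma exists_edge_functionals {S : Set E} (hfin : S.Finite) (hline : ∀ v : E, ¬ S ⊆ ℝ ∙ v) :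
    ∃ a ∈ S, ∃ b ∈ S, ∃ f g : E →ₗ[ℝ] ℝ, (∀ s ∈ S, f s ≤ 1) ∧ (∀ s ∈ S, g s ≤ 1) ∧
      f a = 1 ∧ f b = 1 ∧ g a = 1 ∧ g b < 1 := by
  obtain ⟨s, hs, -⟩ := Set.not_subset.1 (hline 0)
  obtain ⟨a, haS, hmax⟩ := Set.exists_max_image S (‖·‖) hfin ⟨s, hs⟩
  obtain ⟨b₀, hb₀S, hb₀⟩ := Set.not_subset.1 (hline a)
  have ha : 0 < ‖a‖ ^ 2 := by
    have : b₀ ≠ 0 := fun h => hb₀ (h ▸ Submodule.zero_mem _)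
    have := (norm_pos_iff.2 this).trans_le (hmax b₀ hb₀S)
    positivity
  -- `g` is the support functional at the point of `S` farthest from the origin
  set g : E →ₗ[ℝ] ℝ := (‖a‖ ^ 2)⁻¹ • innerₗ E a
  have hg_apply : ∀ x, g x = ⟪a, x⟫ / ‖a‖ ^ 2 := fun x => by simp [g, div_eq_inv_mul]
  have hg_lt : ∀ s ∈ S, s ≠ a → g s < 1 := fun s hs hne => by
    rw [hg_apply, div_lt_one ha]
    exact real_inner_lt_norm_sq_of_norm_le_of_ne (hmax s hs) hne
  have hga : g a = 1 := by
    rw [hg_apply, real_inner_self_eq_norm_sq, div_self ha.ne']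
  have hg : ∀ s ∈ S, g s ≤ 1 := fun s hs => by
    rcases eq_or_ne s a with rfl | hne
    exacts [hga.le, (hg_lt s hs hne).le]
  obtain ⟨h, hb₀h, hker⟩ := Submodule.exists_dual_map_eq_bot_of_notMem hb₀ inferInstance
  have hha : h a = 0 := LinearMap.le_ker_iff_map.2 hker (Submodule.mem_span_singleton_self a)
  obtain ⟨b, hbS, hhb, t, hf, hfb⟩ := exists_add_mul_le_one_and_eq_one hfin g
    ((h b₀)⁻¹ • h) hg ⟨b₀, hb₀S, by simp [hb₀h]⟩
  have hba : b ≠ a := by rintro rfl; simp [hha] at hhb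
  refine ⟨a, haS, b, hbS, g + t • (h b₀)⁻¹ • h, g, ?_, hg, ?_, ?_, hga, hg_lt b hbS hba⟩
  · simpa using hf
  · simp [hga, hha]
  · simpa using hfb

end InnerProductSpace

def intLatticeToEuclidean (n : ℕ) : (Fin n → ℤ) →+ EuclideanSpace ℝ (Fin n) where
  toFun x := WithLp.toLp 2 fun i => (x i : ℝ)
  map_zero' := by ext; simp
  map_add' x y := by ext; simp

lemma not_image_subset_span_singleton {n : ℕ} (hn : 2 ≤ n) {S : Set (Fin n → ℤ)}
    (hgen : AddSubgroup.closure S = ⊤) (v : EuclideanSpace ℝ (Fin n)) :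
    ¬ intLatticeToEuclidean n '' S ⊆ ℝ ∙ v := by
  intro hsub
  have hle : AddSubgroup.closure S ≤
      (ℝ ∙ v).toAddSubgroup.comap (intLatticeToEuclidean n) :=
    (AddSubgroup.closure_le _).2 fun s hs => hsub ⟨s, hs, rfl⟩
  rw [hgen] at hle
  have hcoord : ∀ i : Fin n, ∃ c : ℝ, ∀ j, c * v j = if j = i then 1 else 0 := fun i => by
    obtain ⟨c, hc⟩ := Submodule.mem_span_singleton.1 (hle (AddSubgroup.mem_top (Pi.single i 1)))
    refine ⟨c, fun j => ?_⟩
    simpa [intLatticeToEuclidean, Pi.single_apply] using congrArg (· j) hc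
  obtain ⟨c, hc⟩ := hcoord ⟨0, by omega⟩
  obtain ⟨d, hd⟩ := hcoord ⟨1, by omega⟩
  have hc0 := hc ⟨0, by omega⟩
  have hc1 := hc ⟨1, by omega⟩
  have hd1 := hd ⟨1, by omega⟩
  simp only [Fin.mk.injEq, if_true, one_ne_zero, if_false] at hc0 hc1 hd1
  have : c = 0 := by linear_combination d * hc1 - c * hd1
  simp [this] at hc0

theorem roundness_spectrum_zn_eq_one_general (n : ℕ) (hn : 2 ≤ n) (S : Set (Fin n → ℤ))
    (hfin : S.Finite) (hsym : ∀ v ∈ S, -v ∈ S)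
    (hgen : AddSubgroup.closure S = ⊤) :
    roundness (addWordDist S) = (1 : EReal) := by
  have hS := AddSubmonoid.closure_eq_top_of_neg_mem hsym hgen
  set ι := intLatticeToEuclidean n
  obtain ⟨_, ⟨a, ha, rfl⟩, _, ⟨b, hb, rfl⟩, f, g, hf, hg, hfa, hfb, hga, hgb⟩ :=
    exists_edge_functionals (hfin.image ι) (not_image_subset_span_singleton hn hgen)
  refine roundness_eq_one
    (one_mem_roundnessSet (addWordDist_comm hS hsym) (addWordDist_triangle hS)) fun q hq => ?_
  exact le_one_of_mem_roundnessSet_addWordDist hS hsym ha hb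
    (f.toAddMonoidHom.comp ι) (g.toAddMonoidHom.comp ι) (fun s hs => hf _ ⟨s, hs, rfl⟩)
    (fun s hs => hg _ ⟨s, hs, rfl⟩) hfa hfb hga hgb hq

/-- Every Cayley graph of the free abelian group `ℤⁿ` (`n ≥ 2`) has roundness exactly 1:
for every finite symmetric generating set `Σ` with `0 ∉ Σ`, the word metric `d_Σ` on `ℤⁿ`
has roundness `1`. -/
theorem roundness_spectrum_zn_eq_one (n : ℕ) (hn : 2 ≤ n) (S : Set (Fin n → ℤ))
    (hfin : S.Finite) (hsym : ∀ v ∈ S, -v ∈ S) (h0 : (0 : Fin n → ℤ) ∉ S)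
    (hgen : AddSubgroup.closure S = ⊤) :
    roundness (addWordDist S) = (1 : EReal) :=
  roundness_spectrum_zn_eq_one_general n hn S hfin hsym hgen
end

section
/- Let (X,d) be a geodesic metric space of roundness 2, i.e., for every four points x₀₀, x₀₁, x₁₀, x₁₁ ∈ X one has d(x₀₀,x₁₁)² + d(x₀₁,x₁₀)² ≤ d(x₀₀,x₀₁)² + d(x₀₀,x₁₀)² + d(x₁₁,x₀₁)² + d(x₁₁,x₁₀)². Then for any two points A, B ∈ X there is a unique geodesic segment connecting them: any two isometric embeddings γ₁, γ₂ : [0, d(A,B)] → X with γᵢ(0) = A and γᵢ(d(A,B)) = B are equal. -/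
/-!
A space of roundness 2 has unique midpoints: if `p` and `q` are both at distance `d(x, y) / 2`
from `x` and from `y`, the roundness inequality for `x, p, q, y` reads
`d(x, y)² + d(p, q)² ≤ d(x, y)²`. Hence the parameters at which two geodesic segments from `A`
to `B` agree form a closed subset of `[0, d(A, B)]` that contains both endpoints and is closed
under taking midpoints, and such a subset of `ℝ` is the whole interval.
-/

/-- `γ : ℝ → X` is a geodesic segment from `x` to `y`, parametrized by arclength on
`[0, dist x y]` (i.e. an isometric embedding of `[0, dist x y]` sending `0 ↦ x` and
`dist x y ↦ y`). -/
def IsGeodesicSeg {X : Type*} [MetricSpace X] (x y : X) (γ : ℝ → X) : Prop :=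
  γ 0 = x ∧ γ (dist x y) = y ∧
    ∀ s ∈ Set.Icc (0 : ℝ) (dist x y), ∀ t ∈ Set.Icc (0 : ℝ) (dist x y),
      dist (γ s) (γ t) = |s - t|

/-- A metric space is geodesic if every pair of points is joined by a geodesic segment. -/
def IsGeodesicSpace (X : Type*) [MetricSpace X] : Prop :=
  ∀ x y : X, ∃ γ : ℝ → X, IsGeodesicSeg x y γ

def HasRoundnessTwo (X : Type*) [PseudoMetricSpace X] : Prop :=
  ∀ x00 x01 x10 x11 : X,
    dist x00 x11 ^ 2 + dist x01 x10 ^ 2 ≤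
      dist x00 x01 ^ 2 + dist x00 x10 ^ 2 + dist x11 x01 ^ 2 + dist x11 x10 ^ 2

theorem HasRoundnessTwo.eq_of_dist_eq_half {X : Type*} [MetricSpace X] (hX : HasRoundnessTwo X)
    {x y p q : X} (hxp : dist x p = dist x y / 2) (hpy : dist p y = dist x y / 2)
    (hxq : dist x q = dist x y / 2) (hqy : dist q y = dist x y / 2) : p = q := by
  have h := hX x p q y
  rw [hxp, hxq, dist_comm y p, dist_comm y q, hpy, hqy] at h
  exact dist_le_zero.mp (by nlinarith [dist_nonneg (x := p) (y := q)])

theorem Set.Icc_subset_of_isClosed_of_midpoint_mem {S : Set ℝ} (hS : IsClosed S)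
    (hmid : ∀ x ∈ S, ∀ y ∈ S, (x + y) / 2 ∈ S) {a b : ℝ} (ha : a ∈ S) (hb : b ∈ S) :
    Set.Icc a b ⊆ S := by
  intro t ⟨hat, htb⟩
  by_contra ht
  -- the gap of `S` around `t` is `(c, e)`, and its midpoint lies in `S`
  have hL : IsClosed (S ∩ Set.Icc a t) := hS.inter isClosed_Icc
  have hR : IsClosed (S ∩ Set.Icc t b) := hS.inter isClosed_Icc
  have hLne : (S ∩ Set.Icc a t).Nonempty := ⟨a, ha, le_rfl, hat⟩
  have hRne : (S ∩ Set.Icc t b).Nonempty := ⟨b, hb, htb, le_rfl⟩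
  have hLbdd : BddAbove (S ∩ Set.Icc a t) := ⟨t, fun x hx => hx.2.2⟩
  have hRbdd : BddBelow (S ∩ Set.Icc t b) := ⟨t, fun x hx => hx.2.1⟩
  set c := sSup (S ∩ Set.Icc a t)
  set e := sInf (S ∩ Set.Icc t b)
  obtain ⟨hcS, hac, hct⟩ : c ∈ S ∩ Set.Icc a t := hL.csSup_mem hLne hLbdd
  obtain ⟨heS, hte, heb⟩ : e ∈ S ∩ Set.Icc t b := hR.csInf_mem hRne hRbdd
  have hct' : c < t := lt_of_le_of_ne hct fun h => ht (h ▸ hcS)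
  have hte' : t < e := lt_of_le_of_ne hte fun h => ht (h ▸ heS)
  have hm := hmid c hcS e heS
  rcases le_total ((c + e) / 2) t with hmt | htm
  · have : (c + e) / 2 ≤ c := le_csSup hLbdd ⟨hm, by linarith, hmt⟩
    linarith
  · have : e ≤ (c + e) / 2 := csInf_le hRbdd ⟨hm, htm, by linarith⟩
    linarith

namespace IsGeodesicSeg

variable {X : Type*} [MetricSpace X] {x y : X} {γ : ℝ → X}

theorem continuousOn (hγ : IsGeodesicSeg x y γ) : ContinuousOn γ (Set.Icc 0 (dist x y)) :=
  (LipschitzOnWith.of_dist_le_mul (K := 1) fun s hs t ht => by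
    simp [hγ.2.2 s hs t ht, Real.dist_eq]).continuousOn

theorem dist_left_midpoint (hγ : IsGeodesicSeg x y γ) {s t : ℝ}
    (hs : s ∈ Set.Icc 0 (dist x y)) (ht : t ∈ Set.Icc 0 (dist x y)) :
    dist (γ s) (γ ((s + t) / 2)) = dist (γ s) (γ t) / 2 := by
  have hm : (s + t) / 2 ∈ Set.Icc 0 (dist x y) :=
    ⟨by linarith [hs.1, ht.1], by linarith [hs.2, ht.2]⟩
  rw [hγ.2.2 s hs _ hm, hγ.2.2 s hs t ht, show s - (s + t) / 2 = (s - t) / 2 by ring, abs_div,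
    abs_two]

theorem dist_midpoint_right (hγ : IsGeodesicSeg x y γ) {s t : ℝ}
    (hs : s ∈ Set.Icc 0 (dist x y)) (ht : t ∈ Set.Icc 0 (dist x y)) :
    dist (γ ((s + t) / 2)) (γ t) = dist (γ s) (γ t) / 2 := by
  rw [dist_comm, add_comm, dist_comm (γ s), hγ.dist_left_midpoint ht hs]

theorem eq_at_midpoint {γ' : ℝ → X} (hX : HasRoundnessTwo X) (hγ : IsGeodesicSeg x y γ)
    (hγ' : IsGeodesicSeg x y γ') {s t : ℝ} (hs : s ∈ Set.Icc 0 (dist x y))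
    (ht : t ∈ Set.Icc 0 (dist x y)) (hs' : γ s = γ' s) (ht' : γ t = γ' t) :
    γ ((s + t) / 2) = γ' ((s + t) / 2) := by
  refine hX.eq_of_dist_eq_half (hγ.dist_left_midpoint hs ht) (hγ.dist_midpoint_right hs ht) ?_ ?_
  · rw [hs', ht', hγ'.dist_left_midpoint hs ht]
  · rw [hs', ht', hγ'.dist_midpoint_right hs ht]

end IsGeodesicSeg

theorem unique_geodesic_of_roundness_two_general (X : Type*) [MetricSpace X]
    (hround : ∀ x00 x01 x10 x11 : X,
      dist x00 x11 ^ 2 + dist x01 x10 ^ 2 ≤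
        dist x00 x01 ^ 2 + dist x00 x10 ^ 2 + dist x11 x01 ^ 2 + dist x11 x10 ^ 2)
    (A B : X) (γ₁ γ₂ : ℝ → X) (h₁ : IsGeodesicSeg A B γ₁) (h₂ : IsGeodesicSeg A B γ₂) :
    Set.EqOn γ₁ γ₂ (Set.Icc 0 (dist A B)) := by
  set Z := {t ∈ Set.Icc 0 (dist A B) | γ₁ t = γ₂ t}
  have hZ_closed : IsClosed Z :=
    (h₁.continuousOn.prodMk h₂.continuousOn).preimage_isClosed_of_isClosed isClosed_Icc
      isClosed_diagonal
  have hZ_mid : ∀ s ∈ Z, ∀ t ∈ Z, (s + t) / 2 ∈ Z := by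
    rintro s ⟨hs, hs₁₂⟩ t ⟨ht, ht₁₂⟩
    exact ⟨⟨by linarith [hs.1, ht.1], by linarith [hs.2, ht.2]⟩,
      h₁.eq_at_midpoint hround h₂ hs ht hs₁₂ ht₁₂⟩
  have h0 : (0 : ℝ) ∈ Z := ⟨⟨le_rfl, dist_nonneg⟩, h₁.1.trans h₂.1.symm⟩
  have hd : dist A B ∈ Z := ⟨⟨dist_nonneg, le_rfl⟩, h₁.2.1.trans h₂.2.1.symm⟩
  exact fun t ht => (Set.Icc_subset_of_isClosed_of_midpoint_mem hZ_closed hZ_mid h0 hd ht).2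

/-- In a geodesic metric space of roundness 2 (i.e. the roundness inequality holds with
exponent 2 for all quadruples of points), any two points are connected by a unique
geodesic segment. -/
theorem unique_geodesic_of_roundness_two (X : Type*) [MetricSpace X]
    (hgeo : IsGeodesicSpace X)
    (hround : ∀ x00 x01 x10 x11 : X,
      dist x00 x11 ^ 2 + dist x01 x10 ^ 2 ≤
        dist x00 x01 ^ 2 + dist x00 x10 ^ 2 + dist x11 x01 ^ 2 + dist x11 x10 ^ 2)
    (A B : X) (γ₁ γ₂ : ℝ → X) (h₁ : IsGeodesicSeg A B γ₁) (h₂ : IsGeodesicSeg A B γ₂) :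
    Set.EqOn γ₁ γ₂ (Set.Icc 0 (dist A B)) :=
  unique_geodesic_of_roundness_two_general X hround A B γ₁ γ₂ h₁ h₂
end

section
/- Let (X,d) be a good, compact, geodesic metric space with non-trivial fundamental group. Then the roundness of X is equal to 1. -/
/-- A subset `N` of a metric space is geodesically convex if for all `y, z ∈ N`, every
geodesic segment joining `y` to `z` (of length `dist y z`) has its image in `N`. -/
def GeodesicallyConvex {X : Type*} [MetricSpace X] (N : Set X) : Prop :=
  ∀ y ∈ N, ∀ z ∈ N, ∀ γ : ℝ → X, IsGeodesicSeg y z γ →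
    ∀ t ∈ Set.Icc (0 : ℝ) (dist y z), γ t ∈ N

/-- A metric space is good if every point has a neighborhood which is simply connected
(as a subspace) and geodesically convex. -/
def IsGoodSpace (X : Type*) [MetricSpace X] : Prop :=
  ∀ p : X, ∃ N : Set X, N ∈ nhds p ∧ SimplyConnectedSpace N ∧ GeodesicallyConvex N

/-!
If `q > 1` lies in the roundness set, then in every quadrilateral whose sides are at most `s` and
whose diagonals are at least `D` one has `D ≤ 2 ^ (1 / q) * s`. Let `ℓ > 0` be the infimum of the
lengths of non-contractible loops (positive because short loops stay inside a simply connected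
neighbourhood), and mark a non-contractible loop of length `L` close to `ℓ` at its quarter points.
The sides of this quadrilateral are at most `L / 4`, and both diagonals are at least `ℓ - L / 2`:
a geodesic diagonal cuts the loop into two loops shorter than `ℓ`, which are contractible, so the
loop would be contractible too. Letting `L → ℓ` gives `ℓ / 2 ≤ 2 ^ (1 / q) * ℓ / 4`, which fails
for `q > 1`.

Lengths are measured by Lipschitz constants of loops parametrized by `[0, 1]`. Every loop is
homotopic to a Lipschitz one, obtained by cutting it into pieces that lie in good balls and
replacing each piece by a geodesic.
-/

open Set unitInterval
open scoped NNReal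

theorem LipschitzWith.ite_le {α : Type*} [PseudoMetricSpace α] {f g : ℝ → α} {K : ℝ≥0} {c : ℝ}
    (hf : LipschitzWith K f) (hg : LipschitzWith K g) (hc : f c = g c) :
    LipschitzWith K fun t => if t ≤ c then f t else g t := by
  have key : ∀ s t, s ≤ t →
      dist (if s ≤ c then f s else g s) (if t ≤ c then f t else g t) ≤ K * dist s t := by
    intro s t hst
    by_cases htc : t ≤ c
    · simpa [hst.trans htc, htc] using hf.dist_le_mul s t
    by_cases hsc : s ≤ c
    · simp only [hsc, htc, if_true, if_false]
      calc dist (f s) (g t) ≤ dist (f s) (f c) + dist (g c) (g t) := hc ▸ dist_triangle _ _ _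
        _ ≤ K * dist s c + K * dist c t := add_le_add (hf.dist_le_mul s c) (hg.dist_le_mul c t)
        _ = K * dist s t := by
          simp only [Real.dist_eq, abs_of_nonpos (sub_nonpos.2 hsc),
            abs_of_nonpos (sub_nonpos.2 (not_le.1 htc).le), abs_of_nonpos (sub_nonpos.2 hst)]
          ring
    · simpa [hsc, htc] using hg.dist_le_mul s t
  refine LipschitzWith.of_dist_le_mul fun s t => ?_
  rcases le_total s t with hst | hts
  · exact key s t hst
  · rw [dist_comm, dist_comm s]
    exact key t s hts

theorem unitInterval.dist_convexComb (s t a b : I) :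
    dist (Icc.convexComb s t a) (Icc.convexComb s t b) = dist s t * dist a b := by
  simp only [Subtype.dist_eq, Icc.coe_convexComb, Real.dist_eq, ← abs_mul]
  rw [← abs_neg]
  ring_nf

theorem unitInterval.dist_le_one (s t : I) : dist s t ≤ 1 := by
  rw [Subtype.dist_eq, Real.dist_eq, abs_le]
  constructor <;> linarith [s.2.1, s.2.2, t.2.1, t.2.2]

theorem unitInterval.dist_symm_symm (s t : I) : dist (σ s) (σ t) = dist s t := by
  rw [Subtype.dist_eq, Subtype.dist_eq, coe_symm_eq, coe_symm_eq, Real.dist_eq, Real.dist_eq,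
    ← abs_neg]
  ring_nf

namespace Path

section Topological

variable {X : Type*} [TopologicalSpace X] {x y z : X}

theorem homotopic_of_trans_symm_homotopic_refl {p g : Path x y}
    (h : (p.trans g.symm).Homotopic (Path.refl x)) : p.Homotopic g := by
  rw [← Homotopic.Quotient.eq] at h ⊢
  calc Homotopic.Quotient.mk p
      = ((Homotopic.Quotient.mk p).trans (Homotopic.Quotient.mk g).symm).trans
          (Homotopic.Quotient.mk g) := by
        simp [Homotopic.Quotient.trans_assoc]
    _ = Homotopic.Quotient.mk g := by simpa using congrArg (·.trans (Homotopic.Quotient.mk g)) h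

/-- `A ⬝ P ⬝ C` is the conjugate by `A` of `(P ⬝ g⁻¹) ⬝ (g ⬝ C ⬝ A)`. -/
theorem trans_trans_homotopic_refl {u v w : X} (A : Path u v)
    (P g : Path v w) (C : Path w u) (h₁ : (P.trans g.symm).Homotopic (Path.refl v))
    (h₂ : (g.trans (C.trans A)).Homotopic (Path.refl v)) :
    (A.trans (P.trans C)).Homotopic (Path.refl u) := by
  have hP := homotopic_of_trans_symm_homotopic_refl h₁
  rw [← Homotopic.Quotient.eq] at h₂ hP ⊢
  calc Homotopic.Quotient.mk (A.trans (P.trans C))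
      = (Homotopic.Quotient.mk A).trans
          ((Homotopic.Quotient.mk (g.trans (C.trans A))).trans (Homotopic.Quotient.mk A).symm) := by
        simp [hP, Homotopic.Quotient.trans_assoc]
    _ = _ := by simp [h₂]

theorem homotopic_cast_subpath_trans (γ : Path x y) (r s t : I) {a b c : X} (ha : a = γ r)
    (hb : b = γ s) (hc : c = γ t) :
    (((γ.subpath r s).cast ha hb).trans ((γ.subpath s t).cast hb hc)).Homotopic
      ((γ.subpath r t).cast ha hc) :=
  ⟨(Homotopy.subpathTransSubpath γ r s t).pathCast ha hc⟩

theorem cast_subpath_zero_one (γ : Path x y) :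
    (γ.subpath 0 1).cast γ.source.symm γ.target.symm = γ := by
  ext t
  simp [subpath]

theorem homotopic_trans_cast_subpath (γ : Path x y) (t : I) {b : X} (hb : b = γ t) :
    γ.Homotopic
      (((γ.subpath 0 t).cast γ.source.symm hb).trans ((γ.subpath t 1).cast hb γ.target.symm)) := by
  have h := (homotopic_cast_subpath_trans γ 0 t 1 γ.source.symm hb γ.target.symm).symm
  rwa [cast_subpath_zero_one] at h

noncomputable def transAt (p : Path x y) (q : Path y z) {c : ℝ} (hc₀ : 0 < c) (hc₁ : c < 1) :
    Path x z where
  toFun t := if (t : ℝ) ≤ c then p.extend (t / c) else q.extend ((t - c) / (1 - c))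
  continuous_toFun := by
    refine Continuous.if_le (by fun_prop) (by fun_prop) continuous_subtype_val continuous_const
      fun t ht => ?_
    simp [ht, hc₀.ne']
  source' := by simp [hc₀.le]
  target' := by simp [not_le.2 hc₁, (sub_pos.2 hc₁).ne']

theorem transAt_apply_of_le (p : Path x y) (q : Path y z) {c : ℝ} {hc₀ : 0 < c} {hc₁ : c < 1}
    {t : I} (ht : (t : ℝ) ≤ c) :
    p.transAt q hc₀ hc₁ t = p.extend (t / c) :=
  if_pos ht

theorem transAt_apply_of_ge (p : Path x y) (q : Path y z) {c : ℝ} {hc₀ : 0 < c} {hc₁ : c < 1}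
    {t : I} (ht : c ≤ t) :
    p.transAt q hc₀ hc₁ t = q.extend ((t - c) / (1 - c)) := by
  rcases ht.eq_or_lt with h | h
  · simp [transAt_apply_of_le p q h.ge, ← h, hc₀.ne']
  · exact if_neg (not_le.2 h)

theorem homotopic_trans_transAt (p : Path x y) (q : Path y z) {c : ℝ} (hc₀ : 0 < c)
    (hc₁ : c < 1) :
    (p.trans q).Homotopic (p.transAt q hc₀ hc₁) := by
  set r := p.transAt q hc₀ hc₁
  let c' : I := ⟨c, hc₀.le, hc₁.le⟩
  have hy : y = r c' := by simp [r, transAt_apply_of_le p q (t := c') le_rfl, c', hc₀.ne']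
  have hp : (r.subpath 0 c').cast r.source.symm hy = p := by
    ext t
    have ht : ((Icc.convexComb 0 c' t : I) : ℝ) ≤ c := by
      simpa [c'] using mul_le_of_le_one_left hc₀.le t.2.2
    simp [r, subpath, transAt_apply_of_le p q ht, c', hc₀.ne']
  have hq : (r.subpath c' 1).cast hy r.target.symm = q := by
    ext t
    have ht : c ≤ ((Icc.convexComb c' 1 t : I) : ℝ) := by
      simp only [Icc.coe_convexComb, Icc.coe_one, c']
      nlinarith [t.2.1, hc₁]
    have h1c : (1 : ℝ) - c ≠ 0 := (sub_pos.2 hc₁).ne'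
    simp only [r, subpath, cast_coe, coe_mk_mk, Function.comp_apply, transAt_apply_of_ge p q ht,
      Icc.coe_convexComb, Icc.coe_one, c']
    rw [show ((1 - t) * c + t * 1 - c) / (1 - c) = t by field_simp; ring, extend_extends']
  simpa [hp, hq] using (homotopic_trans_cast_subpath r c' hy).symm

end Topological

section Lipschitz

variable {X : Type*} [MetricSpace X] {x y z : X} {K K₁ K₂ : ℝ≥0}

theorem lipschitzWith_extend {γ : Path x y} (hγ : LipschitzWith K γ) :
    LipschitzWith K γ.extend :=
  mul_one K ▸ hγ.comp (LipschitzWith.projIcc (zero_le_one' ℝ))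

theorem lipschitzWith_symm {γ : Path x y} (hγ : LipschitzWith K γ) : LipschitzWith K γ.symm :=
  LipschitzWith.of_dist_le_mul fun s t =>
    (hγ.dist_le_mul (σ s) (σ t)).trans_eq (by rw [dist_symm_symm])

theorem lipschitzWith_subpath {γ : Path x y} (hγ : LipschitzWith K γ) (s t : I) :
    LipschitzWith (K * nndist s t) (γ.subpath s t) :=
  hγ.comp <| LipschitzWith.of_dist_le_mul fun a b => by rw [dist_convexComb, coe_nndist]

theorem eq_refl_of_lipschitzWith_zero {γ : Path x x} (hγ : LipschitzWith 0 γ) :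
    γ = Path.refl x := by
  ext t
  exact dist_le_zero.1 <| by simpa using hγ.dist_le_mul t 0

theorem lipschitzWith_transAt {p : Path x y} {q : Path y z} {c : ℝ} (hc₀ : 0 < c) (hc₁ : c < 1)
    (hp : LipschitzWith K₁ p) (hq : LipschitzWith K₂ q) (h₁ : (K₁ : ℝ) ≤ K * c)
    (h₂ : (K₂ : ℝ) ≤ K * (1 - c)) : LipschitzWith K (p.transAt q hc₀ hc₁) := by
  have hf : LipschitzWith K fun t : ℝ => p.extend (t / c) :=
    .of_dist_le_mul fun s t => ((lipschitzWith_extend hp).dist_le_mul _ _).trans <| by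
      rw [Real.dist_eq, Real.dist_eq, ← sub_div, abs_div, abs_of_pos hc₀, mul_div_assoc',
        div_le_iff₀ hc₀]
      nlinarith [abs_nonneg (s - t)]
  have hg : LipschitzWith K fun t : ℝ => q.extend ((t - c) / (1 - c)) :=
    .of_dist_le_mul fun s t => ((lipschitzWith_extend hq).dist_le_mul _ _).trans <| by
      rw [Real.dist_eq, Real.dist_eq, ← sub_div, sub_sub_sub_cancel_right, abs_div,
        abs_of_pos (sub_pos.2 hc₁), mul_div_assoc', div_le_iff₀ (sub_pos.2 hc₁)]
      nlinarith [abs_nonneg (s - t)]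
  exact mul_one K ▸ (hf.ite_le hg (by simp [hc₀.ne'])).comp (LipschitzWith.subtype_val _)

theorem exists_lipschitzWith_add_homotopic_trans_of_pos {p : Path x y} {q : Path y z}
    (hp : LipschitzWith K₁ p) (hq : LipschitzWith K₂ q) (h₁ : 0 < K₁) (h₂ : 0 < K₂) :
    ∃ r : Path x z, LipschitzWith (K₁ + K₂) r ∧ (p.trans q).Homotopic r := by
  -- splitting at `c = K₁ / (K₁ + K₂)` runs through both `p` and `q` at speed `K₁ + K₂`
  have hK : (0 : ℝ) < K₁ + K₂ := by positivity
  have hc₀ : (0 : ℝ) < K₁ / (K₁ + K₂) := by positivity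
  have hc₁ : (K₁ : ℝ) / (K₁ + K₂) < 1 := by
    rw [div_lt_one hK]
    simpa using h₂
  refine ⟨p.transAt q hc₀ hc₁, lipschitzWith_transAt hc₀ hc₁ hp hq ?_ ?_,
    homotopic_trans_transAt p q hc₀ hc₁⟩
  · rw [NNReal.coe_add, mul_div_cancel₀ _ hK.ne']
  · rw [NNReal.coe_add, one_sub_div hK.ne', add_sub_cancel_left, mul_div_cancel₀ _ hK.ne']

theorem exists_lipschitzWith_add_homotopic_trans {p : Path x y} {q : Path y z}
    (hp : LipschitzWith K₁ p) (hq : LipschitzWith K₂ q) :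
    ∃ r : Path x z, LipschitzWith (K₁ + K₂) r ∧ (p.trans q).Homotopic r := by
  rcases eq_zero_or_pos K₁ with rfl | h₁
  · obtain rfl : x = y := dist_le_zero.1 <| by simpa using hp.dist_le_mul 0 1
    rw [eq_refl_of_lipschitzWith_zero hp]
    exact ⟨q, by simpa using hq, ⟨Homotopy.reflTrans q⟩⟩
  rcases eq_zero_or_pos K₂ with rfl | h₂
  · obtain rfl : y = z := dist_le_zero.1 <| by simpa using hq.dist_le_mul 0 1
    rw [eq_refl_of_lipschitzWith_zero hq]
    exact ⟨p, by simpa using hp, ⟨Homotopy.transRefl p⟩⟩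
  exact exists_lipschitzWith_add_homotopic_trans_of_pos hp hq h₁ h₂

end Lipschitz

end Path

theorem IsGeodesicSpace.exists_path {X : Type*} [MetricSpace X] (hX : IsGeodesicSpace X) (x y : X) :
    ∃ g : Path x y, LipschitzWith (nndist x y) g ∧
      ∀ N : Set X, GeodesicallyConvex N → x ∈ N → y ∈ N → ∀ t, g t ∈ N := by
  obtain ⟨γ, hγ⟩ := hX x y
  have ⟨hγ₀, hγ₁, hiso⟩ := hγ
  have hmem : ∀ t : I, dist x y * t ∈ Icc 0 (dist x y) := fun t =>
    ⟨mul_nonneg dist_nonneg t.2.1, mul_le_of_le_one_right dist_nonneg t.2.2⟩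
  have hlip : LipschitzWith (nndist x y) fun t : I => γ (dist x y * t) :=
    LipschitzWith.of_dist_le_mul fun s t => by
      rw [hiso _ (hmem s) _ (hmem t), Subtype.dist_eq, Real.dist_eq, ← mul_sub, abs_mul,
        abs_of_nonneg dist_nonneg, coe_nndist]
  refine ⟨⟨⟨fun t => γ (dist x y * t), hlip.continuous⟩, by simpa using hγ₀, by simpa using hγ₁⟩,
    hlip, fun N hN hx hy t => hN x hx y hy γ hγ _ (hmem t)⟩

theorem IsSimplyConnected.homotopic_refl {X : Type*} [TopologicalSpace X] {N : Set X}
    (hN : IsSimplyConnected N) {u : X} (γ : Path u u) (hγ : ∀ t, γ t ∈ N) :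
    γ.Homotopic (Path.refl u) := by
  obtain ⟨F, -⟩ := (isSimplyConnected_iff_exists_homotopy_refl_forall_mem.1 hN).2 u γ hγ
  exact ⟨F⟩

section GoodRadius

variable {X : Type*} [MetricSpace X] {ε : ℝ}

def IsGoodRadius (X : Type*) [MetricSpace X] (ε : ℝ) : Prop :=
  ∀ a : X, ∃ N : Set X, IsSimplyConnected N ∧ GeodesicallyConvex N ∧ Metric.ball a ε ⊆ N

theorem IsGoodSpace.exists_isGoodRadius [CompactSpace X] (hX : IsGoodSpace X) :
    ∃ ε > 0, IsGoodRadius X ε := by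
  choose N hN hsc hconv using hX
  obtain ⟨ε, hε, hball⟩ := lebesgue_number_lemma_of_metric isCompact_univ
    (fun p => isOpen_interior) fun p _ => mem_iUnion.2 ⟨p, mem_interior_iff_mem_nhds.2 (hN p)⟩
  refine ⟨ε, hε, fun a => ?_⟩
  obtain ⟨p, hp⟩ := hball a trivial
  exact ⟨N p, hsc p, hconv p, hp.trans interior_subset⟩

theorem IsGoodRadius.homotopic_refl (hε : IsGoodRadius X ε) {u : X} (γ : Path u u)
    (hγ : ∀ t, γ t ∈ Metric.ball u ε) : γ.Homotopic (Path.refl u) := by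
  obtain ⟨N, hN, -, hball⟩ := hε u
  exact hN.homotopic_refl γ fun t => hball (hγ t)

theorem IsGoodRadius.exists_lipschitzWith_homotopic_of_forall_mem_ball (hε : IsGoodRadius X ε)
    (hgeo : IsGeodesicSpace X) {u v : X} (p : Path u v) (hp : ∀ t, p t ∈ Metric.ball u ε) :
    ∃ g : Path u v, LipschitzWith (nndist u v) g ∧ p.Homotopic g := by
  obtain ⟨N, hN, hconv, hball⟩ := hε u
  have hu : u ∈ N := hball (by simpa using hp 0)
  have hv : v ∈ N := hball (by simpa using hp 1)
  obtain ⟨g, hg, hgN⟩ := hgeo.exists_path u v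
  refine ⟨g, hg, Path.homotopic_of_trans_symm_homotopic_refl (hN.homotopic_refl _ fun t => ?_)⟩
  have ht : (p.trans g.symm) t ∈ range (p.trans g.symm) := mem_range_self t
  rw [Path.trans_range, Path.symm_range] at ht
  rcases ht with ⟨s, hs⟩ | ⟨s, hs⟩ <;> rw [← hs]
  · exact hball (hp s)
  · exact hgN N hconv hu hv s

theorem IsGoodRadius.exists_lipschitzWith_homotopic_of_dist_lt (hε : IsGoodRadius X ε)
    (hgeo : IsGeodesicSpace X) (n : ℕ) {u v : X} (p : Path u v)
    (hp : ∀ s t : I, dist s t ≤ (1 / 2) ^ n → dist (p s) (p t) < ε) :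
    ∃ (K : ℝ≥0) (p' : Path u v), LipschitzWith K p' ∧ p.Homotopic p' := by
  induction n generalizing u v with
  | zero =>
    obtain ⟨g, hg, hpg⟩ := hε.exists_lipschitzWith_homotopic_of_forall_mem_ball hgeo p fun t => by
      simpa using hp t 0 (by simpa using dist_le_one t 0)
    exact ⟨_, g, hg, hpg⟩
  | succ n ih =>
    let h : I := ⟨1 / 2, by norm_num, by norm_num⟩
    have hsub : ∀ s t : I, dist s t = 1 / 2 → ∀ a b : I, dist a b ≤ (1 / 2) ^ n →
        dist (p.subpath s t a) (p.subpath s t b) < ε := fun s t hst a b hab =>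
      hp _ _ (by rw [dist_convexComb, hst, pow_succ']; gcongr)
    obtain ⟨K₁, p₁, hp₁, h₁⟩ := ih ((p.subpath 0 h).cast p.source.symm rfl)
      (hsub 0 h (by norm_num [h, Subtype.dist_eq, Real.dist_eq]))
    obtain ⟨K₂, p₂, hp₂, h₂⟩ := ih ((p.subpath h 1).cast rfl p.target.symm)
      (hsub h 1 (by norm_num [h, Subtype.dist_eq, Real.dist_eq]))
    obtain ⟨r, hr, hpr⟩ := Path.exists_lipschitzWith_add_homotopic_trans hp₁ hp₂
    exact ⟨_, r, hr, (p.homotopic_trans_cast_subpath h rfl).trans ((h₁.hcomp h₂).trans hpr)⟩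

theorem IsGoodRadius.exists_lipschitzWith_homotopic (hε : IsGoodRadius X ε) (hε₀ : 0 < ε)
    (hgeo : IsGeodesicSpace X) {u v : X} (p : Path u v) :
    ∃ (K : ℝ≥0) (p' : Path u v), LipschitzWith K p' ∧ p.Homotopic p' := by
  obtain ⟨δ, hδ, hpδ⟩ := Metric.uniformContinuous_iff.1
    (CompactSpace.uniformContinuous_of_continuous p.continuous) ε hε₀
  obtain ⟨n, hn⟩ := exists_pow_lt_of_lt_one hδ (by norm_num : (1 / 2 : ℝ) < 1)
  exact hε.exists_lipschitzWith_homotopic_of_dist_lt hgeo n p fun s t hst => hpδ (hst.trans_lt hn)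

end GoodRadius

section Systole

variable {X : Type*} [MetricSpace X] {ε : ℝ}

def essentialLoopConstants (X : Type*) [MetricSpace X] : Set ℝ≥0 :=
  {K | ∃ (u : X) (γ : Path u u), LipschitzWith K γ ∧ ¬γ.Homotopic (Path.refl u)}

noncomputable def lipschitzSystole (X : Type*) [MetricSpace X] : ℝ≥0 :=
  sInf (essentialLoopConstants X)

theorem Path.homotopic_refl_of_lipschitzWith_of_lt_lipschitzSystole {u : X} {γ : Path u u}
    {K : ℝ≥0} (hγ : LipschitzWith K γ) (hK : (K : ℝ) < lipschitzSystole X) :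
    γ.Homotopic (Path.refl u) := by
  by_contra h
  have hmem : K ∈ essentialLoopConstants X := ⟨u, γ, hγ, h⟩
  exact (csInf_le (OrderBot.bddBelow _) hmem).not_gt (by exact_mod_cast hK)

theorem IsGoodRadius.le_of_mem_essentialLoopConstants (hε : IsGoodRadius X ε) {K : ℝ≥0}
    (hK : K ∈ essentialLoopConstants X) : ε ≤ K := by
  obtain ⟨u, γ, hγ, hess⟩ := hK
  by_contra! hKε
  refine hess (hε.homotopic_refl γ fun t => ?_)
  calc dist (γ t) u = dist (γ t) (γ 0) := by rw [γ.source]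
    _ ≤ K * dist t 0 := hγ.dist_le_mul t 0
    _ ≤ K * 1 := by gcongr; exact dist_le_one t 0
    _ < ε := by simpa using hKε

theorem IsGoodRadius.essentialLoopConstants_nonempty (hε : IsGoodRadius X ε) (hε₀ : 0 < ε)
    (hgeo : IsGeodesicSpace X) (hπ : ∃ x : X, Nontrivial (FundamentalGroup X x)) :
    (essentialLoopConstants X).Nonempty := by
  obtain ⟨x, hx⟩ := hπ
  obtain ⟨γ, hγ⟩ : ∃ γ : Path x x, ¬γ.Homotopic (Path.refl x) := by
    obtain ⟨φ, hφ⟩ := exists_ne (1 : FundamentalGroup X x)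
    induction φ using Path.Homotopic.Quotient.ind with
    | mk γ => exact ⟨γ, fun h => hφ (Path.Homotopic.Quotient.eq.2 h)⟩
  obtain ⟨K, γ', hγ', h⟩ := hε.exists_lipschitzWith_homotopic hε₀ hgeo γ
  exact ⟨K, x, γ', hγ', fun h' => hγ (h.trans h')⟩

theorem IsGoodRadius.lipschitzSystole_pos (hε : IsGoodRadius X ε) (hε₀ : 0 < ε)
    (hne : (essentialLoopConstants X).Nonempty) : 0 < lipschitzSystole X :=
  (Real.toNNReal_pos.2 hε₀).trans_le <| le_csInf hne fun _ hK =>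
    Real.toNNReal_le_iff_le_coe.2 (hε.le_of_mem_essentialLoopConstants hK)

/-- Write `γ = A ⬝ P ⬝ C` with `P` running from `γ s` to `γ t`, and let `g` be a geodesic between
these points. If they were closer, both loops `P ⬝ g⁻¹` and `g ⬝ C ⬝ A` would be shorter than the
systole, hence null-homotopic, and so would be `γ`. -/
theorem Path.lipschitzSystole_le_add_dist (hgeo : IsGeodesicSpace X) {u : X} {γ : Path u u}
    {L : ℝ≥0} (hγ : LipschitzWith L γ) (hess : ¬γ.Homotopic (Path.refl u)) {s t : I}
    (hst : (t : ℝ) = s + 1 / 2) : (lipschitzSystole X : ℝ) ≤ L / 2 + dist (γ s) (γ t) := by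
  by_contra! hlt
  have hP : dist s t = 1 / 2 := by
    rw [Subtype.dist_eq, hst, Real.dist_eq]
    norm_num
  have hCA : dist t 1 + dist 0 s = 1 / 2 := by
    simp only [Subtype.dist_eq, Icc.coe_one, Icc.coe_zero, Real.dist_eq]
    rw [abs_of_nonpos (by linarith [t.2.2]), abs_of_nonpos (by linarith [s.2.1])]
    linarith
  obtain ⟨g, hg, -⟩ := hgeo.exists_path (γ s) (γ t)
  obtain ⟨r₁, hr₁, h₁⟩ := exists_lipschitzWith_add_homotopic_trans (lipschitzWith_subpath hγ s t)
    (lipschitzWith_symm hg)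
  obtain ⟨r₂, hr₂, h₂⟩ := exists_lipschitzWith_add_homotopic_trans
    (p := (γ.subpath t 1).cast rfl γ.target.symm) (q := (γ.subpath 0 s).cast γ.source.symm rfl)
    (lipschitzWith_subpath hγ t 1) (lipschitzWith_subpath hγ 0 s)
  obtain ⟨r₃, hr₃, h₃⟩ := exists_lipschitzWith_add_homotopic_trans hg hr₂
  have hnull₁ := h₁.trans (homotopic_refl_of_lipschitzWith_of_lt_lipschitzSystole hr₁ <| by
    push_cast [coe_nndist, hP]
    linarith)
  have hnull₂ := ((Homotopic.refl g).hcomp h₂).trans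
    (h₃.trans (homotopic_refl_of_lipschitzWith_of_lt_lipschitzSystole hr₃ <| by
      push_cast [coe_nndist]
      rw [← mul_add, hCA]
      linarith))
  refine hess ((γ.homotopic_trans_cast_subpath s rfl).trans ?_)
  refine ((Homotopic.refl _).hcomp (homotopic_cast_subpath_trans γ s t 1 rfl rfl _).symm).trans ?_
  exact trans_trans_homotopic_refl _ _ g _ hnull₁ hnull₂

end Systole

section Roundness

theorem one_mem_roundnessSet_s5 {X : Type*} [PseudoMetricSpace X] :
    (1 : ℝ) ∈ roundnessSet (fun x y : X => dist x y) := by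
  refine ⟨le_rfl, fun x₀₀ x₀₁ x₁₀ x₁₁ => ?_⟩
  simp only [Real.rpow_one]
  linarith [dist_triangle x₀₀ x₀₁ x₁₁, dist_triangle x₀₁ x₀₀ x₁₀, dist_triangle x₀₀ x₁₀ x₁₁,
    dist_triangle x₀₁ x₁₁ x₁₀, dist_comm x₀₁ x₁₁, dist_comm x₁₀ x₁₁, dist_comm x₀₁ x₀₀]

theorem le_two_rpow_inv_mul_of_mem_roundnessSet {X : Type*} [PseudoMetricSpace X] {q : ℝ}
    (hq : q ∈ roundnessSet (fun x y : X => dist x y)) {x₀₀ x₀₁ x₁₀ x₁₁ : X} {D s : ℝ}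
    (hD₁ : D ≤ dist x₀₀ x₁₁) (hD₂ : D ≤ dist x₀₁ x₁₀) (hs₁ : dist x₀₀ x₀₁ ≤ s)
    (hs₂ : dist x₀₀ x₁₀ ≤ s) (hs₃ : dist x₁₁ x₀₁ ≤ s) (hs₄ : dist x₁₁ x₁₀ ≤ s) :
    D ≤ 2 ^ q⁻¹ * s := by
  obtain ⟨hq₁, hround⟩ := hq
  have hq₀ : 0 < q := by linarith
  have hs : 0 ≤ s := dist_nonneg.trans hs₁
  rcases le_or_gt D 0 with hD | hD
  · exact hD.trans (by positivity)
  have mono : ∀ {a b : ℝ}, 0 ≤ a → a ≤ b → a ^ q ≤ b ^ q := fun ha hab =>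
    Real.rpow_le_rpow ha hab hq₀.le
  have key : D ^ q ≤ 2 * s ^ q := by
    linarith [hround x₀₀ x₀₁ x₁₀ x₁₁, mono hD.le hD₁, mono hD.le hD₂, mono dist_nonneg hs₁,
      mono dist_nonneg hs₂, mono dist_nonneg hs₃, mono dist_nonneg hs₄]
  rwa [← Real.rpow_le_rpow_iff hD.le (by positivity) hq₀, Real.mul_rpow (by positivity) hs,
    ← Real.rpow_mul zero_le_two, inv_mul_cancel₀ hq₀.ne', Real.rpow_one]

variable {X : Type*} [MetricSpace X]

theorem Path.four_mul_lipschitzSystole_le (hgeo : IsGeodesicSpace X) {q : ℝ}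
    (hq : q ∈ roundnessSet (fun x y : X => dist x y)) {u : X} {γ : Path u u} {L : ℝ≥0}
    (hγ : LipschitzWith L γ) (hess : ¬γ.Homotopic (Path.refl u)) :
    4 * (lipschitzSystole X : ℝ) ≤ (2 + 2 ^ q⁻¹) * L := by
  let a : I := ⟨1 / 4, by norm_num, by norm_num⟩
  let b : I := ⟨1 / 2, by norm_num, by norm_num⟩
  let c : I := ⟨3 / 4, by norm_num, by norm_num⟩
  have side : ∀ s t : I, |(s : ℝ) - t| = 1 / 4 → dist (γ s) (γ t) ≤ L / 4 := fun s t h =>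
    (hγ.dist_le_mul s t).trans_eq (by rw [Subtype.dist_eq, Real.dist_eq, h]; ring)
  have h₀₁ : γ 0 = γ 1 := γ.source.trans γ.target.symm
  have := le_two_rpow_inv_mul_of_mem_roundnessSet hq (x₀₀ := γ 0) (x₀₁ := γ a) (x₁₀ := γ c)
    (x₁₁ := γ b) (D := lipschitzSystole X - L / 2) (s := L / 4)
    (by linarith [lipschitzSystole_le_add_dist hgeo hγ hess (s := 0) (t := b) (by norm_num [b])])
    (by linarith [lipschitzSystole_le_add_dist hgeo hγ hess (s := a) (t := c) (by norm_num [a, c])])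
    (side _ _ (by norm_num [a])) (by rw [h₀₁]; exact side _ _ (by norm_num [c]))
    (side _ _ (by norm_num [a, b])) (side _ _ (by norm_num [b, c]))
  linarith

theorem le_one_of_mem_roundnessSet (hgeo : IsGeodesicSpace X)
    (hne : (essentialLoopConstants X).Nonempty) (hℓ : 0 < lipschitzSystole X) {q : ℝ}
    (hq : q ∈ roundnessSet (fun x y : X => dist x y)) : q ≤ 1 := by
  by_contra! hq₁
  have hθ : (2 : ℝ) ^ q⁻¹ < 2 := by
    simpa using Real.rpow_lt_rpow_of_exponent_lt one_lt_two (inv_lt_one_of_one_lt₀ hq₁)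
  have hℓ' : (0 : ℝ) < lipschitzSystole X := hℓ
  have hlt : lipschitzSystole X < (4 * (lipschitzSystole X : ℝ) / (2 + 2 ^ q⁻¹)).toNNReal := by
    rw [Real.lt_toNNReal_iff_coe_lt, lt_div_iff₀ (by positivity)]
    nlinarith
  obtain ⟨L, ⟨u, γ, hγ, hess⟩, hL⟩ := exists_lt_of_csInf_lt hne hlt
  rw [Real.lt_toNNReal_iff_coe_lt, lt_div_iff₀ (by positivity)] at hL
  linarith [γ.four_mul_lipschitzSystole_le hgeo hq hγ hess]

end Roundness

/-- A good, compact, geodesic metric space with non-trivial fundamental group has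
roundness equal to 1. -/
theorem roundness_eq_one_of_good_compact (X : Type*) [MetricSpace X] [CompactSpace X]
    (hgeo : IsGeodesicSpace X) (hgood : IsGoodSpace X)
    (hpi : ∃ x : X, Nontrivial (FundamentalGroup X x)) :
    roundness (fun x y : X => dist x y) = (1 : EReal) := by
  obtain ⟨ε, hε₀, hε⟩ := hgood.exists_isGoodRadius
  have hne := hε.essentialLoopConstants_nonempty hε₀ hgeo hpi
  have hset : roundnessSet (fun x y : X => dist x y) = {1} :=
    eq_singleton_iff_unique_mem.2 ⟨one_mem_roundnessSet_s5, fun q hq =>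
      (le_one_of_mem_roundnessSet hgeo hne (hε.lipschitzSystole_pos hε₀ hne) hq).antisymm hq.1⟩
  rw [roundness, hset, image_singleton, sSup_singleton]
  rfl
end

section
/- The roundness of the circle is 1. More precisely, if S¹ is the circle of circumference L > 0 equipped with its intrinsic (arc-length) metric d, then the supremum of all exponents q ≥ 1 such that for every four points x₀₀, x₀₁, x₁₀, x₁₁ ∈ S¹ one has d(x₀₀,x₁₁)^q + d(x₀₁,x₁₀)^q ≤ d(x₀₀,x₀₁)^q + d(x₀₀,x₁₀)^q + d(x₁₁,x₀₁)^q + d(x₁₁,x₁₀)^q equals 1. -/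
lemma addCircle_dist_eq (L a b : ℝ) :
    dist ((a : ℝ) : AddCircle L) ((b : ℝ) : AddCircle L)
      = |a - b - round (L⁻¹ * (a - b)) * L| := by
  rw [dist_eq_norm, ← AddCircle.coe_sub, AddCircle.norm_eq]

lemma roundnessSet_circle (L : ℝ) (hL : 0 < L) :
    roundnessSet (fun x y : AddCircle L => dist x y) = {1} := by
  ext q
  simp only [Set.mem_singleton_iff, roundnessSet, Set.mem_setOf_eq]
  constructor
  · rintro ⟨hq1, hq⟩
    -- use four equally spaced points
    have h := hq ((0 : ℝ) : AddCircle L) ((L/4 : ℝ) : AddCircle L)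
      ((3*L/4 : ℝ) : AddCircle L) ((L/2 : ℝ) : AddCircle L)
    have e1 : dist ((0 : ℝ) : AddCircle L) ((L/2 : ℝ) : AddCircle L) = L/2 := by
      rw [addCircle_dist_eq, show L⁻¹ * (0 - L/2) = -(1/2) by field_simp; try ring,
        show round (-(1/2) : ℝ) = 0 by norm_num [round_eq]]
      push_cast
      rw [show (0:ℝ) - L/2 - (0:ℝ) * L = -(L/2) by ring, abs_neg, abs_of_pos (by linarith)]
    have e2 : dist ((L/4 : ℝ) : AddCircle L) ((3*L/4 : ℝ) : AddCircle L) = L/2 := by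
      rw [addCircle_dist_eq, show L⁻¹ * (L/4 - 3*L/4) = -(1/2) by field_simp; try ring,
        show round (-(1/2) : ℝ) = 0 by norm_num [round_eq]]
      push_cast
      rw [show (L/4:ℝ) - 3*L/4 - (0:ℝ) * L = -(L/2) by ring, abs_neg, abs_of_pos (by linarith)]
    have e3 : dist ((0 : ℝ) : AddCircle L) ((L/4 : ℝ) : AddCircle L) = L/4 := by
      rw [addCircle_dist_eq, show L⁻¹ * (0 - L/4) = -(1/4) by field_simp; try ring,
        show round (-(1/4) : ℝ) = 0 by norm_num [round_eq]]
      push_cast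
      rw [show (0:ℝ) - L/4 - (0:ℝ) * L = -(L/4) by ring, abs_neg, abs_of_pos (by linarith)]
    have e4 : dist ((0 : ℝ) : AddCircle L) ((3*L/4 : ℝ) : AddCircle L) = L/4 := by
      rw [addCircle_dist_eq, show L⁻¹ * (0 - 3*L/4) = -(3/4) by field_simp; try ring,
        show round (-(3/4) : ℝ) = -1 by norm_num [round_eq]]
      push_cast
      rw [show (0:ℝ) - 3*L/4 - (-1:ℝ) * L = L/4 by ring, abs_of_pos (by linarith)]
    have e5 : dist ((L/2 : ℝ) : AddCircle L) ((L/4 : ℝ) : AddCircle L) = L/4 := by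
      rw [addCircle_dist_eq, show L⁻¹ * (L/2 - L/4) = 1/4 by field_simp; try ring,
        show round (1/4 : ℝ) = 0 by norm_num [round_eq]]
      push_cast
      rw [show (L/2:ℝ) - L/4 - (0:ℝ) * L = L/4 by ring, abs_of_pos (by linarith)]
    have e6 : dist ((L/2 : ℝ) : AddCircle L) ((3*L/4 : ℝ) : AddCircle L) = L/4 := by
      rw [addCircle_dist_eq, show L⁻¹ * (L/2 - 3*L/4) = -(1/4) by field_simp; try ring,
        show round (-(1/4) : ℝ) = 0 by norm_num [round_eq]]
      push_cast
      rw [show (L/2:ℝ) - 3*L/4 - (0:ℝ) * L = -(L/4) by ring, abs_neg, abs_of_pos (by linarith)]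
    rw [e1, e2, e3, e4, e5, e6] at h
    have h4 : (0:ℝ) < L/4 := by linarith
    have hsplit : (L/2 : ℝ) ^ q = (L/4 : ℝ) ^ q * 2 ^ q := by
      rw [← Real.mul_rpow (le_of_lt h4) (by norm_num)]
      ring_nf
    rw [hsplit] at h
    have hpos : (0:ℝ) < (L/4) ^ q := Real.rpow_pos_of_pos h4 q
    have h2 : (2:ℝ) ^ q ≤ 2 := by nlinarith
    have h2' : (2:ℝ) ^ q ≤ (2:ℝ) ^ (1:ℝ) := by rwa [Real.rpow_one]
    have := (Real.rpow_le_rpow_left_iff (x := 2) (by norm_num)).mp h2'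
    linarith
  · rintro rfl
    refine ⟨le_refl _, fun a b c d => ?_⟩
    simp only [Real.rpow_one]
    have t1 : dist a d ≤ dist a b + dist b d := dist_triangle a b d
    have t2 : dist a d ≤ dist a c + dist c d := dist_triangle a c d
    have t3 : dist b c ≤ dist b a + dist a c := dist_triangle b a c
    have t4 : dist b c ≤ dist b d + dist d c := dist_triangle b d c
    rw [dist_comm b d] at t1 t4
    rw [dist_comm c d] at t2
    rw [dist_comm b a] at t3
    linarith

/-- The circle of circumference `L > 0` (realized as `AddCircle L = ℝ / Lℤ`, whose
quotient metric is the intrinsic arc-length metric) has roundness exactly 1. -/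
theorem roundness_circle (L : ℝ) (hL : 0 < L) :
    roundness (fun x y : AddCircle L => dist x y) = (1 : EReal) := by
  rw [roundness, roundnessSet_circle L hL, Set.image_singleton, sSup_singleton]
  norm_num
end

section
/- Let (X,d) be a geodesic metric space that admits a globally minimizing closed geodesic, i.e., an isometric embedding of a circle of some circumference ℓ > 0 (equipped with its intrinsic arc-length metric) into X. Then the roundness of X is 1. -/
/-- Distance on `AddCircle ℓ` between lifts agrees with the real distance when it is at
most half the circumference. -/
lemma AddCircleDistAux.circ_dist (ℓ : ℝ) (hℓ : 0 < ℓ) (x y : ℝ) (h1 : |x - y| ≤ ℓ / 2) :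
    dist (↑x : AddCircle ℓ) ↑y = |x - y| := by
  rw [dist_eq_norm, ← AddCircle.coe_sub]
  exact (AddCircle.norm_coe_eq_abs_iff ℓ hℓ.ne').mpr (by rwa [abs_of_pos hℓ])

/-- A geodesic metric space admitting a globally minimizing closed geodesic, i.e. an
isometric embedding of a circle of circumference `ℓ > 0` (with its intrinsic arc-length
metric, realized as `AddCircle ℓ`), has roundness 1. -/
theorem roundness_eq_one_of_closed_geodesic (X : Type*) [MetricSpace X]
    (hgeo : IsGeodesicSpace X) (ℓ : ℝ) (hℓ : 0 < ℓ)
    (f : AddCircle ℓ → X) (hf : Isometry f) :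
    roundness (fun x y : X => dist x y) = (1 : EReal) := by
  have hset : roundnessSet (fun x y : X => dist x y) = {1} := by
    apply Set.eq_singleton_iff_unique_mem.mpr
    constructor
    · refine ⟨le_refl 1, fun a b c e => ?_⟩
      simp only [Real.rpow_one]
      have h1 : dist a e ≤ dist a b + dist e b := dist_triangle_right a e b
      have h2 : dist a e ≤ dist a c + dist e c := dist_triangle_right a e c
      have h3 : dist b c ≤ dist a b + dist a c := dist_triangle_left b c a
      have h4 : dist b c ≤ dist e b + dist e c := by
        calc dist b c ≤ dist b e + dist e c := dist_triangle b e c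
        _ = dist e b + dist e c := by rw [dist_comm b e]
      linarith
    · rintro q ⟨hq1, hq⟩
      -- use the four quarter points on the circle
      set a := f ((0 : ℝ) : AddCircle ℓ)
      set b := f ((ℓ/4 : ℝ) : AddCircle ℓ)
      set c := f ((ℓ/2 : ℝ) : AddCircle ℓ)
      set e := f ((3*ℓ/4 : ℝ) : AddCircle ℓ)
      have hq4 := hq a b e c
      have d1 : dist a c = ℓ/2 := by
        rw [hf.dist_eq, AddCircleDistAux.circ_dist ℓ hℓ] <;>
          rw [abs_of_nonpos (by linarith)] <;> linarith
      have d2 : dist b e = ℓ/2 := by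
        rw [hf.dist_eq, AddCircleDistAux.circ_dist ℓ hℓ] <;>
          rw [abs_of_nonpos (by linarith)] <;> linarith
      have d3 : dist a b = ℓ/4 := by
        rw [hf.dist_eq, AddCircleDistAux.circ_dist ℓ hℓ] <;>
          rw [abs_of_nonpos (by linarith)] <;> linarith
      have hcoe : ((3*ℓ/4 : ℝ) : AddCircle ℓ) = ((-(ℓ/4) : ℝ) : AddCircle ℓ) := by
        apply QuotientAddGroup.eq_iff_sub_mem.mpr
        exact AddSubgroup.mem_zmultiples_iff.mpr ⟨1, by rw [one_zsmul]; ring⟩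
      have d4 : dist a e = ℓ/4 := by
        rw [hf.dist_eq, hcoe, AddCircleDistAux.circ_dist ℓ hℓ] <;>
          rw [abs_of_nonneg (by linarith)] <;> linarith
      have d5 : dist c b = ℓ/4 := by
        rw [hf.dist_eq, AddCircleDistAux.circ_dist ℓ hℓ] <;>
          rw [abs_of_nonneg (by linarith)] <;> linarith
      have d6 : dist c e = ℓ/4 := by
        rw [hf.dist_eq, AddCircleDistAux.circ_dist ℓ hℓ] <;>
          rw [abs_of_nonpos (by linarith)] <;> linarith
      simp only at hq4
      rw [d1, d2, d3, d4, d5, d6] at hq4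
      -- now 2 * (ℓ/2)^q ≤ 4 * (ℓ/4)^q, which forces q ≤ 1
      have key : (2:ℝ) ^ q ≤ 2 := by
        have h24 : (ℓ/2 : ℝ) = 2 * (ℓ/4) := by ring
        have hr : (0:ℝ) < ℓ/4 := by linarith
        rw [h24, Real.mul_rpow (by norm_num) hr.le] at hq4
        have hrq : (0:ℝ) < (ℓ/4) ^ q := Real.rpow_pos_of_pos hr q
        nlinarith [hq4, hrq]
      have := (Real.rpow_le_rpow_left_iff (x := 2) (by norm_num) (y := q) (z := 1)).mp
        (by rwa [Real.rpow_one])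
      linarith
  rw [roundness, hset]
  simp
end

section
/- Let F_n be a non-trivial free group on free generators a₁, …, a_n (n ≥ 1) and let Σ = {a₁^{±1}, …, a_n^{±1}} be the standard symmetric generating set. Then the metric space (F_n, d_Σ), where d_Σ is the word metric associated to Σ, has roundness 2. -/
/-- The word length of `g` with respect to a generating set `S`:
the least `n` such that `g` is a product of `n` elements of `S`. -/
noncomputable def wordLength {G : Type*} [Group G] (S : Set G) (g : G) : ℕ :=
  sInf {n : ℕ | ∃ l : List G, l.length = n ∧ (∀ x ∈ l, x ∈ S) ∧ l.prod = g}

/-- The word metric on a group `G` associated to a generating set `S`. -/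
noncomputable def wordDist {G : Type*} [Group G] (S : Set G) (g h : G) : ℝ :=
  wordLength S (g⁻¹ * h)

namespace List

variable {α : Type*} [DecidableEq α]

def commonPrefixLength : List α → List α → ℕ
  | a :: u, b :: v => if a = b then commonPrefixLength u v + 1 else 0
  | _, _ => 0

@[simp]
theorem commonPrefixLength_nil_left (v : List α) : commonPrefixLength [] v = 0 := by
  cases v <;> rfl

@[simp]
theorem commonPrefixLength_nil_right (u : List α) : commonPrefixLength u [] = 0 := by
  cases u <;> rfl

theorem commonPrefixLength_cons_cons (a b : α) (u v : List α) :
    commonPrefixLength (a :: u) (b :: v) = if a = b then commonPrefixLength u v + 1 else 0 :=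
  rfl

theorem commonPrefixLength_comm (u v : List α) :
    commonPrefixLength u v = commonPrefixLength v u := by
  induction u generalizing v with
  | nil => simp
  | cons a u ih =>
    cases v with
    | nil => simp
    | cons b v => simp only [commonPrefixLength_cons_cons, ih, eq_comm]

theorem min_commonPrefixLength_le (u v w : List α) :
    min (commonPrefixLength u v) (commonPrefixLength v w) ≤ commonPrefixLength u w := by
  induction v generalizing u w with
  | nil => simp
  | cons b v ih =>
    cases u with
    | nil => simp
    | cons a u =>
      cases w with
      | nil => simp
      | cons c w =>
        simp only [commonPrefixLength_cons_cons]
        by_cases hab : a = b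
        · by_cases hbc : b = c
          · simp only [hab, hbc, if_true]
            have := ih u w
            omega
          · simp [hab, hbc]
        · simp [hab]

end List

section Roundness

variable {X : Type*} {d : X → X → ℝ}

theorem roundness_eq_of_isGreatest {q : ℝ} (h : IsGreatest (roundnessSet d) q) :
    roundness d = q :=
  (EReal.coe_strictMono.monotone.map_isGreatest h).isLUB.sSup_eq

theorem le_two_of_mem_roundnessSet {x m y : X} {t : ℝ} (ht : 0 < t) (hxm : d x m = t)
    (hym : d y m = t) (hmm : d m m = 0) (hxy : d x y = 2 * t) {q : ℝ}
    (hq : q ∈ roundnessSet d) : q ≤ 2 := by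
  obtain ⟨hq1, hround⟩ := hq
  have h := hround x m m y
  rw [hxy, hxm, hym, hmm, Real.zero_rpow (by linarith), Real.mul_rpow zero_le_two ht.le] at h
  have htq : 0 < t ^ q := Real.rpow_pos_of_pos ht q
  have h4 : (2 : ℝ) ^ q ≤ 2 ^ (2 : ℝ) := by
    rw [Real.rpow_two]
    nlinarith
  exact (Real.rpow_le_rpow_left_iff one_lt_two).1 h4

theorem sq_add_sq_le_of_add_eq {a b s₁ s₂ s₃ s₄ : ℝ}
    (ha₁ : a ≤ s₁ + s₃) (ha₂ : a ≤ s₂ + s₄) (hb₁ : b ≤ s₁ + s₂) (hb₂ : b ≤ s₃ + s₄)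
    (h : a + b = s₁ + s₄) :
    a ^ 2 + b ^ 2 ≤ s₁ ^ 2 + s₂ ^ 2 + s₃ ^ 2 + s₄ ^ 2 := by
  obtain rfl : b = s₁ + s₄ - a := by linarith
  -- the difference is `(s₂² - (a - s₄)²) + (s₃² - (a - s₁)²) + (s₁ - s₄)²`
  nlinarith [mul_nonneg (sub_nonneg.2 ha₂) (sub_nonneg.2 hb₁),
    mul_nonneg (sub_nonneg.2 ha₁) (sub_nonneg.2 hb₂), sq_nonneg (s₁ - s₄)]

theorem sq_add_sq_le_of_add_le {a b s₁ s₂ s₃ s₄ : ℝ} (ha : 0 ≤ a) (hb : 0 ≤ b)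
    (h : a + b ≤ s₁ + s₄) (h' : s₁ + s₄ = s₂ + s₃) :
    a ^ 2 + b ^ 2 ≤ s₁ ^ 2 + s₂ ^ 2 + s₃ ^ 2 + s₄ ^ 2 := by
  nlinarith [sq_nonneg (s₁ - s₄), sq_nonneg (s₂ - s₃), mul_nonneg ha hb]

theorem sq_add_sq_le_of_fourPoint {a b s₁ s₂ s₃ s₄ : ℝ} (ha : 0 ≤ a) (hb : 0 ≤ b)
    (ha₁ : a ≤ s₁ + s₃) (ha₂ : a ≤ s₂ + s₄) (hb₁ : b ≤ s₁ + s₂) (hb₂ : b ≤ s₃ + s₄)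
    (hab : a + b ≤ max (s₁ + s₄) (s₂ + s₃))
    (h₁₄ : s₁ + s₄ ≤ max (a + b) (s₂ + s₃))
    (h₂₃ : s₂ + s₃ ≤ max (a + b) (s₁ + s₄)) :
    a ^ 2 + b ^ 2 ≤ s₁ ^ 2 + s₂ ^ 2 + s₃ ^ 2 + s₄ ^ 2 := by
  rcases le_total (s₂ + s₃) (s₁ + s₄) with h | h
  · rw [max_eq_left h] at hab
    rcases le_max_iff.1 h₁₄ with h' | h'
    · exact sq_add_sq_le_of_add_eq ha₁ ha₂ hb₁ hb₂ (le_antisymm hab h')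
    · exact sq_add_sq_le_of_add_le ha hb hab (le_antisymm h' h)
  · rw [max_eq_right h] at hab
    rcases le_max_iff.1 h₂₃ with h' | h'
    · have := sq_add_sq_le_of_add_eq (s₁ := s₂) (s₂ := s₁) (s₃ := s₄) (s₄ := s₃) ha₂ ha₁
        (by linarith) (by linarith) (le_antisymm hab h')
      linarith
    · exact sq_add_sq_le_of_add_le ha hb (hab.trans h') (le_antisymm h h')

theorem two_mem_roundnessSet_of_fourPoint (hnonneg : ∀ x y, 0 ≤ d x y)
    (hsymm : ∀ x y, d x y = d y x) (htriangle : ∀ x y z, d x z ≤ d x y + d y z)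
    (hfour : ∀ p q r s, d p s + d q r ≤ max (d p q + d s r) (d p r + d s q)) :
    2 ∈ roundnessSet d := by
  refine ⟨one_le_two, fun x₀₀ x₀₁ x₁₀ x₁₁ => ?_⟩
  simp only [Real.rpow_two]
  refine sq_add_sq_le_of_fourPoint (hnonneg _ _) (hnonneg _ _) ?_ ?_ ?_ ?_ (hfour _ _ _ _) ?_ ?_
  · rw [hsymm x₁₁]; exact htriangle _ _ _
  · rw [hsymm x₁₁]; exact htriangle _ _ _
  · rw [hsymm x₀₀]; exact htriangle _ _ _
  · rw [hsymm x₁₁]; exact htriangle _ _ _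
  · simpa only [hsymm x₀₁ x₁₁] using hfour x₀₀ x₁₁ x₁₀ x₀₁
  · simpa only [hsymm x₁₀] using hfour x₀₀ x₁₁ x₀₁ x₁₀

end Roundness

namespace FreeGroup

variable {α : Type*} [DecidableEq α]

theorem IsReduced.invRev {L : List (α × Bool)} (h : IsReduced L) : IsReduced (invRev L) := by
  have := isReduced_toWord (x := (mk L)⁻¹)
  rwa [toWord_inv, toWord_mk, h.reduce_eq] at this

theorem norm_mk_of_isReduced {L : List (α × Bool)} (h : IsReduced L) : norm (mk L) = L.length := by
  rw [norm, toWord_mk, h.reduce_eq]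

theorem norm_mk_inv_mul_mk_add_two_mul_commonPrefixLength {u v : List (α × Bool)}
    (hu : IsReduced u) (hv : IsReduced v) :
    norm ((mk u)⁻¹ * mk v) + 2 * u.commonPrefixLength v = u.length + v.length := by
  induction u generalizing v with
  | nil => simp [← one_eq_mk, norm_mk_of_isReduced hv]
  | cons a u ih =>
    cases v with
    | nil => simp [← one_eq_mk, norm_mk_of_isReduced hu.invRev, invRev_length]
    | cons b v =>
      have hcons (c : α × Bool) (w : List (α × Bool)) : mk (c :: w) = mk [c] * mk w := by
        rw [mul_mk]; rfl
      rw [List.commonPrefixLength_cons_cons]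
      split_ifs with hab
      · subst hab
        have := ih (v := v) hu.tail hv.tail
        rw [hcons a u, hcons a v, mul_inv_rev, mul_assoc, inv_mul_cancel_left]
        simp only [List.length_cons]
        omega
      · have hred : IsReduced (invRev (a :: u) ++ b :: v) := by
          have hinv : invRev (a :: u) = invRev u ++ [(a.1, !a.2)] := by simp [invRev]
          rw [hinv]
          refine IsReduced.append_overlap (hinv ▸ hu.invRev) ?_ (List.cons_ne_nil _ _)
          refine isReduced_cons_cons.2 ⟨fun h => ?_, hv⟩
          obtain ⟨a₁, a₂⟩ := a
          obtain ⟨b₁, b₂⟩ := b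
          cases a₂ <;> cases b₂ <;> simp_all
        rw [inv_mk, mul_mk, norm_mk_of_isReduced hred]
        simp [invRev_length]

theorem norm_inv_mul_add_two_mul_commonPrefixLength (x y : FreeGroup α) :
    norm (x⁻¹ * y) + 2 * x.toWord.commonPrefixLength y.toWord = norm x + norm y := by
  have := norm_mk_inv_mul_mk_add_two_mul_commonPrefixLength (isReduced_toWord (x := x))
    (isReduced_toWord (x := y))
  rwa [mk_toWord, mk_toWord] at this

theorem norm_add_norm_inv_mul_le_max (x y z : FreeGroup α) :
    norm z + norm (x⁻¹ * y) ≤ max (norm x + norm (z⁻¹ * y)) (norm y + norm (z⁻¹ * x)) := by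
  have hxy := norm_inv_mul_add_two_mul_commonPrefixLength x y
  have hzy := norm_inv_mul_add_two_mul_commonPrefixLength z y
  have hzx := norm_inv_mul_add_two_mul_commonPrefixLength z x
  have hmin := List.min_commonPrefixLength_le x.toWord z.toWord y.toWord
  rw [List.commonPrefixLength_comm x.toWord] at hmin
  omega

theorem norm_inv_mul_comm (x y : FreeGroup α) : norm (x⁻¹ * y) = norm (y⁻¹ * x) := by
  rw [← norm_inv_eq, mul_inv_rev, inv_inv]

theorem norm_inv_mul_le (x y z : FreeGroup α) :
    norm (x⁻¹ * z) ≤ norm (x⁻¹ * y) + norm (y⁻¹ * z) := by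
  simpa only [mul_assoc, mul_inv_cancel_left] using norm_mul_le (x⁻¹ * y) (y⁻¹ * z)

theorem norm_inv_mul_add_norm_inv_mul_le_max (p q r s : FreeGroup α) :
    norm (p⁻¹ * s) + norm (q⁻¹ * r) ≤
      max (norm (p⁻¹ * q) + norm (s⁻¹ * r)) (norm (p⁻¹ * r) + norm (s⁻¹ * q)) := by
  simpa only [mul_inv_rev, inv_inv, mul_assoc, mul_inv_cancel_left] using
    norm_add_norm_inv_mul_le_max (p⁻¹ * q) (p⁻¹ * r) (p⁻¹ * s)

variable (α) in
def symmetricGenerators : Set (FreeGroup α) := Set.range of ∪ Set.range fun a => (of a)⁻¹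

theorem norm_prod_le_length {l : List (FreeGroup α)} (hl : ∀ x ∈ l, x ∈ symmetricGenerators α) :
    norm l.prod ≤ l.length := by
  induction l with
  | nil => simp
  | cons x l ih =>
    have hx : norm x = 1 := by
      rcases hl x List.mem_cons_self with ⟨a, rfl⟩ | ⟨a, rfl⟩ <;> simp [norm_inv_eq, norm_of]
    have := ih fun y hy => hl y (List.mem_cons_of_mem x hy)
    grw [List.prod_cons, norm_mul_le, hx, this, List.length_cons, add_comm]

theorem wordLength_symmetricGenerators (g : FreeGroup α) :
    wordLength (symmetricGenerators α) g = norm g := by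
  have hword : norm g ∈ {n | ∃ l : List (FreeGroup α), l.length = n ∧
      (∀ x ∈ l, x ∈ symmetricGenerators α) ∧ l.prod = g} := by
    refine ⟨g.toWord.map fun p => cond p.2 (of p.1) (of p.1)⁻¹, List.length_map _, ?_, ?_⟩
    · simp only [List.mem_map]
      rintro _ ⟨⟨a, _ | _⟩, -, rfl⟩
      exacts [Or.inr ⟨a, rfl⟩, Or.inl ⟨a, rfl⟩]
    · rw [← lift_mk, mk_toWord, lift_of_apply]
  refine le_antisymm (Nat.sInf_le hword) (le_csInf ⟨_, hword⟩ ?_)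
  rintro _ ⟨l, rfl, hl, rfl⟩
  exact norm_prod_le_length hl

theorem wordDist_symmetricGenerators :
    wordDist (symmetricGenerators α) = fun x y => (norm (x⁻¹ * y) : ℝ) := by
  ext x y
  rw [wordDist, wordLength_symmetricGenerators]

end FreeGroup

/-- The Cayley graph of a non-trivial free group `F_n` (`n ≥ 1`) with respect to the
standard symmetric generating set `{a₁^{±1}, …, a_n^{±1}}` has roundness 2. -/
theorem roundness_free_group (n : ℕ) (hn : 1 ≤ n) :
    roundness (wordDist
      ((Set.range fun i : Fin n => FreeGroup.of i) ∪
        (Set.range fun i : Fin n => (FreeGroup.of i)⁻¹))) = (2 : EReal) := by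
  rw [show _ ∪ _ = FreeGroup.symmetricGenerators (Fin n) from rfl,
    FreeGroup.wordDist_symmetricGenerators]
  set a : FreeGroup (Fin n) := FreeGroup.of ⟨0, hn⟩
  refine roundness_eq_of_isGreatest ⟨two_mem_roundnessSet_of_fourPoint
    (fun _ _ => Nat.cast_nonneg _) (fun x y => congrArg _ (FreeGroup.norm_inv_mul_comm x y))
    (fun x y z => by exact_mod_cast FreeGroup.norm_inv_mul_le x y z)
    (fun p q r s => by exact_mod_cast FreeGroup.norm_inv_mul_add_norm_inv_mul_le_max p q r s),
    fun q => le_two_of_mem_roundnessSet (x := 1) (m := a) (y := a ^ 2) one_pos ?_ ?_ ?_ ?_⟩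
  · simp [a, FreeGroup.norm_of]
  · rw [show (a ^ 2)⁻¹ * a = a⁻¹ by group]
    simp [a, FreeGroup.norm_inv_eq, FreeGroup.norm_of]
  · simp
  · norm_num [a, FreeGroup.norm_of_pow]
end

section
/- Let Σ be a finite symmetric generating set of ℤ² (Σ = −Σ, 0 ∉ Σ, and Σ generates ℤ²) with |Σ| ≥ 8. Then there exist elements g, h ∈ Σ with g ≠ h and g ≠ −h such that g + h ∉ Σ and g − h ∉ Σ. -/
/-!
Suppose no pair works. Take `g ∈ S` maximising the positive definite form `Q x = x₁² + x₂²` and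
put `f = polar Q g`. For `x ≠ ±g` in `S` with `f x ≥ 0`, `g + x` is longer than `g`, so `g - x ∈ S`,
and as `g - x` is no longer than `g`, `f x ≥ Q x > 0`. Hence `f` vanishes nowhere on `S`, and
`x ↦ g - x` permutes the set `H` of `x ∈ S \ {g}` with `f x > 0`, which has `|S| / 2 - 1 ≥ 3`
elements. Let `u` maximise `f` on `H`. For `k ∈ H \ {u, g - u}`, maximality of `u` excludes
`u + k ∈ S`, so `u - k ∈ H`. Composed with the reflection, this makes translation by `u - g` map
`K = H \ {u, g - u}` into itself except at `2 • (g - u)`. As `K` is finite, all of `K` lies in the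
cyclic group generated by `g - u`, hence so do `g`, `H` and `S`; but no cyclic group is all of `ℤ²`.
-/

open Finset QuadraticMap AddSubgroup

theorem Finset.exists_add_nsmul_eq_of_add_mem {M : Type*} [AddCommGroup M]
    [IsAddTorsionFree M] (K : Finset M) {w k₀ k : M} (hw : w ≠ 0)
    (hK : ∀ k ∈ K, k ≠ k₀ → k + w ∈ K) (hk : k ∈ K) :
    ∃ n : ℕ, k + n • w = k₀ := by
  by_contra! hne
  have hmem : ∀ n : ℕ, k + n • w ∈ K := by
    intro n
    induction n with
    | zero => simpa using hk
    | succ n ih => simpa [succ_nsmul, add_assoc] using hK _ ih (hne n)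
  have hinj : Function.Injective fun n : ℕ => k + n • w := by
    intro m n h
    have : (m : ℤ) • w = (n : ℤ) • w := by simpa [natCast_zsmul] using add_left_cancel h
    exact_mod_cast smul_left_injective ℤ hw this
  exact Set.infinite_of_injective_forall_mem hinj hmem K.finite_toSet

theorem Finset.card_eq_two_mul_card_filter_pos {α β : Type*} [InvolutiveNeg α] [AddCommGroup β]
    [LinearOrder β] [IsOrderedAddMonoid β] (S : Finset α) (f : α → β)
    (hS : ∀ x ∈ S, -x ∈ S) (hf : ∀ x, f (-x) = -f x) (hf0 : ∀ x ∈ S, f x ≠ 0) :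
    #S = 2 * #(S.filter fun x => 0 < f x) := by
  rw [← card_filter_add_card_filter_not (fun x => 0 < f x), two_mul]
  congr 1
  refine card_bij' (fun x _ => -x) (fun x _ => -x) ?_ ?_ (fun x _ => neg_neg x)
    (fun x _ => neg_neg x)
  · intro x hx
    simp only [mem_filter, hf, neg_pos, not_lt] at hx ⊢
    exact ⟨hS x hx.1, hx.2.lt_of_ne (hf0 x hx.1)⟩
  · intro x hx
    simp only [mem_filter, hf, not_lt] at hx ⊢
    exact ⟨hS x hx.1, neg_nonpos.2 hx.2.le⟩

theorem AddSubgroup.zmultiples_ne_top_int_prod (v : ℤ × ℤ) : zmultiples v ≠ ⊤ := by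
  intro h
  obtain ⟨a, ha⟩ := mem_zmultiples_iff.1 (h ▸ mem_top ((1, 0) : ℤ × ℤ))
  obtain ⟨b, hb⟩ := mem_zmultiples_iff.1 (h ▸ mem_top ((0, 1) : ℤ × ℤ))
  simp only [Prod.ext_iff, Prod.smul_fst, Prod.smul_snd, smul_eq_mul] at ha hb
  have : (1 : ℤ) = 0 := by linear_combination (-(b * v.2)) * ha.1 - hb.2 + (b * v.1) * ha.2
  exact one_ne_zero this

namespace QuadraticMap

variable {R M : Type*} [CommRing R] [AddCommGroup M] [Module R M] {Q : QuadraticForm R M}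

theorem map_sub_eq_sub_polar (x y : M) : Q (x - y) = Q x + Q y - polar Q x y := by
  rw [sub_eq_add_neg, QuadraticMap.map_add Q, polar_neg_right, Q.map_neg]
  ring

theorem polar_self_eq_two_mul (x : M) : polar Q x x = 2 * Q x := by
  rw [polar_self, two_nsmul, two_mul]

variable [LinearOrder R] [IsStrictOrderedRing R]

theorem PosDef.isAddTorsionFree (hQ : Q.PosDef) : IsAddTorsionFree M where
  nsmul_right_injective n hn x y hxy := by
    have h : Q ((n : R) • (x - y)) = 0 := by
      rw [Nat.cast_smul_eq_nsmul, nsmul_sub, show n • x = n • y from hxy, sub_self, map_zero]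
    rw [Q.map_smul, smul_eq_mul, mul_eq_zero, mul_self_eq_zero, Nat.cast_eq_zero] at h
    exact sub_eq_zero.1 (hQ.anisotropic _ (h.resolve_left hn))

theorem PosDef.eq_of_map_le_of_two_mul_le_polar (hQ : Q.PosDef) {x y : M} (hle : Q x ≤ Q y)
    (hpolar : 2 * Q y ≤ polar Q y x) : x = y := by
  have : Q (y - x) ≤ 0 := by rw [map_sub_eq_sub_polar]; linarith
  exact (sub_eq_zero.1 (hQ.le_zero_iff.1 this)).symm

theorem PosDef.polar_lt_two_mul (hQ : Q.PosDef) {S : Finset M} {g x : M}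
    (hmax : ∀ y ∈ S, Q y ≤ Q g) (hx : x ∈ S) (hxg : x ≠ g) : polar Q g x < 2 * Q g :=
  lt_of_not_ge fun h => hxg (hQ.eq_of_map_le_of_two_mul_le_polar (hmax x hx) h)

theorem posDef_sq_prod_sq : ((sq : QuadraticMap ℤ ℤ ℤ).prod sq).PosDef :=
  have h : (sq : QuadraticMap ℤ ℤ ℤ).PosDef := fun x hx => by simpa using mul_self_pos.2 hx
  h.prod h

end QuadraticMap

structure SumOrDiffClosed {M : Type*} [AddCommGroup M] (S : Finset M) : Prop where
  neg_mem : ∀ x ∈ S, -x ∈ S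
  zero_notMem : (0 : M) ∉ S
  add_or_sub_mem : ∀ x ∈ S, ∀ y ∈ S, x ≠ y → x ≠ -y → x + y ∈ S ∨ x - y ∈ S

theorem SumOrDiffClosed.map_pos {R M : Type*} [CommRing R] [PartialOrder R] [AddCommGroup M]
    [Module R M] {Q : QuadraticForm R M} {S : Finset M} {x : M} (hS : SumOrDiffClosed S)
    (hQ : Q.PosDef) (hx : x ∈ S) : 0 < Q x :=
  hQ x (ne_of_mem_of_not_mem hx hS.zero_notMem)

section UpperHalf

variable {R M : Type*} [CommRing R] [LinearOrder R] [AddCommGroup M] [Module R M] [DecidableEq M]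

def upperHalf (Q : QuadraticForm R M) (S : Finset M) (g : M) : Finset M :=
  (S.filter fun x => 0 < polar Q g x).erase g

theorem mem_upperHalf {Q : QuadraticForm R M} {S : Finset M} {g x : M} :
    x ∈ upperHalf Q S g ↔ x ≠ g ∧ x ∈ S ∧ 0 < polar Q g x := by
  rw [upperHalf, mem_erase, mem_filter]

end UpperHalf

namespace SumOrDiffClosed

variable {R M : Type*} [CommRing R] [LinearOrder R] [IsStrictOrderedRing R]
  [AddCommGroup M] [Module R M] {Q : QuadraticForm R M} {S : Finset M} {g u x k : M}

theorem sub_mem_and_map_le_polar (hS : SumOrDiffClosed S) (hQ : Q.PosDef) (hg : g ∈ S)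
    (hmax : ∀ y ∈ S, Q y ≤ Q g) (hx : x ∈ S) (hxg : x ≠ g) (hxg' : x ≠ -g)
    (hpolar : 0 ≤ polar Q g x) : g - x ∈ S ∧ Q x ≤ polar Q g x := by
  have hQx := hS.map_pos hQ hx
  have hadd : g + x ∉ S := fun h => by
    have := hmax _ h
    rw [QuadraticMap.map_add Q] at this
    linarith
  have hsub : g - x ∈ S :=
    (hS.add_or_sub_mem g hg x hx hxg.symm fun h => hxg' (by rw [h, neg_neg])).resolve_left hadd
  refine ⟨hsub, ?_⟩
  have := hmax _ hsub
  rw [map_sub_eq_sub_polar] at this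
  linarith

theorem polar_ne_zero (hS : SumOrDiffClosed S) (hQ : Q.PosDef) (hg : g ∈ S)
    (hmax : ∀ y ∈ S, Q y ≤ Q g) (hx : x ∈ S) : polar Q g x ≠ 0 := by
  intro h0
  have hQg := hS.map_pos hQ hg
  have hQx := hS.map_pos hQ hx
  by_cases hxg : x = g
  · rw [hxg, polar_self_eq_two_mul] at h0
    linarith
  by_cases hxg' : x = -g
  · rw [hxg', polar_neg_right, polar_self_eq_two_mul] at h0
    linarith
  linarith [(hS.sub_mem_and_map_le_polar hQ hg hmax hx hxg hxg' h0.ge).2]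

section UpperHalf

variable [DecidableEq M]

theorem sub_mem_upperHalf (hS : SumOrDiffClosed S) (hQ : Q.PosDef) (hg : g ∈ S)
    (hmax : ∀ y ∈ S, Q y ≤ Q g) (hx : x ∈ upperHalf Q S g) : g - x ∈ upperHalf Q S g := by
  obtain ⟨hxg, hxS, hpos⟩ := mem_upperHalf.1 hx
  have hQg := hS.map_pos hQ hg
  have hxg' : x ≠ -g := by
    rintro rfl
    rw [polar_neg_right, polar_self_eq_two_mul] at hpos
    linarith
  refine mem_upperHalf.2
    ⟨?_, (hS.sub_mem_and_map_le_polar hQ hg hmax hxS hxg hxg' hpos.le).1, ?_⟩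
  · rw [Ne, sub_eq_self]
    exact ne_of_mem_of_not_mem hxS hS.zero_notMem
  · rw [polar_sub_right, polar_self_eq_two_mul]
    linarith [hQ.polar_lt_two_mul hmax hxS hxg]

theorem max_sub_mem_upperHalf (hS : SumOrDiffClosed S) (hQ : Q.PosDef) (hg : g ∈ S)
    (hmax : ∀ y ∈ S, Q y ≤ Q g) (hu : u ∈ upperHalf Q S g)
    (humax : ∀ y ∈ upperHalf Q S g, polar Q g y ≤ polar Q g u) (hk : k ∈ upperHalf Q S g)
    (hku : k ≠ u) (hkgu : k ≠ g - u) : u - k ∈ upperHalf Q S g := by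
  obtain ⟨hug, huS, hupos⟩ := mem_upperHalf.1 hu
  obtain ⟨hkg, hkS, hkpos⟩ := mem_upperHalf.1 hk
  have hadd : u + k ∉ S := fun h => by
    have hne : u + k ≠ g := fun he => hkgu (by rw [← he, add_sub_cancel_left])
    have := humax _ (mem_upperHalf.2 ⟨hne, h, by rw [polar_add_right]; linarith⟩)
    rw [polar_add_right] at this
    linarith
  have huk' : u ≠ -k := by
    rintro rfl
    rw [polar_neg_right] at hupos
    linarith
  have hsub : u - k ∈ S := (hS.add_or_sub_mem u huS k hkS hku.symm huk').resolve_left hadd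
  have hnonneg : 0 ≤ polar Q g (u - k) := by
    rw [polar_sub_right]
    linarith [humax k hk]
  refine mem_upperHalf.2 ⟨fun he => ?_, hsub,
    hnonneg.lt_of_ne (hS.polar_ne_zero hQ hg hmax hsub).symm⟩
  have h2 : polar Q g (u - k) = 2 * Q g := by rw [he, polar_self_eq_two_mul]
  rw [polar_sub_right] at h2
  linarith [hQ.polar_lt_two_mul hmax huS hug]

theorem sub_mem_erase_erase (hS : SumOrDiffClosed S) (hQ : Q.PosDef) (hg : g ∈ S)
    (hmax : ∀ y ∈ S, Q y ≤ Q g) (hk : k ∈ ((upperHalf Q S g).erase u).erase (g - u)) :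
    g - k ∈ ((upperHalf Q S g).erase u).erase (g - u) := by
  obtain ⟨hkgu, hku, hk⟩ : k ≠ g - u ∧ k ≠ u ∧ k ∈ upperHalf Q S g := by
    simpa only [mem_erase] using hk
  refine mem_erase.2 ⟨fun h => hku (sub_right_injective h), mem_erase.2 ⟨fun h => hkgu ?_,
    hS.sub_mem_upperHalf hQ hg hmax hk⟩⟩
  rw [← h, sub_sub_cancel]

theorem add_sub_mem_erase_erase (hS : SumOrDiffClosed S) (hQ : Q.PosDef) (hg : g ∈ S)
    (hmax : ∀ y ∈ S, Q y ≤ Q g) (hu : u ∈ upperHalf Q S g)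
    (humax : ∀ y ∈ upperHalf Q S g, polar Q g y ≤ polar Q g u)
    (hk : k ∈ ((upperHalf Q S g).erase u).erase (g - u)) (hk2 : k ≠ 2 • (g - u)) :
    k + (u - g) ∈ ((upperHalf Q S g).erase u).erase (g - u) := by
  have hkg : k ≠ g := (mem_upperHalf.1 (mem_of_mem_erase (mem_of_mem_erase hk))).1
  obtain ⟨hgk_gu, hgk_u, hgk⟩ :
      g - k ≠ g - u ∧ g - k ≠ u ∧ g - k ∈ upperHalf Q S g := by
    simpa only [mem_erase] using hS.sub_mem_erase_erase hQ hg hmax hk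
  have hmem := hS.max_sub_mem_upperHalf hQ hg hmax hu humax hgk hgk_u hgk_gu
  rw [show u - (g - k) = k + (u - g) by abel] at hmem
  refine mem_erase.2 ⟨fun h => hk2 ?_, mem_erase.2 ⟨fun h => hkg ?_, hmem⟩⟩ <;>
  · rw [← sub_eq_zero] at h ⊢
    rw [← h]
    abel

theorem insert_upperHalf_subset_zmultiples (hS : SumOrDiffClosed S) (hQ : Q.PosDef)
    (hg : g ∈ S) (hmax : ∀ y ∈ S, Q y ≤ Q g) (hu : u ∈ upperHalf Q S g)
    (humax : ∀ y ∈ upperHalf Q S g, polar Q g y ≤ polar Q g u)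
    (hK : (((upperHalf Q S g).erase u).erase (g - u)).Nonempty) :
    ∀ x ∈ insert g (upperHalf Q S g), x ∈ zmultiples (g - u) := by
  have := hQ.isAddTorsionFree
  have hKv : ∀ k ∈ ((upperHalf Q S g).erase u).erase (g - u), k ∈ zmultiples (g - u) := by
    intro k hk
    obtain ⟨n, hn⟩ := exists_add_nsmul_eq_of_add_mem _ (sub_ne_zero.2 (mem_upperHalf.1 hu).1)
      (fun k hk hk2 => hS.add_sub_mem_erase_erase hQ hg hmax hu humax hk hk2) hk
    rw [eq_sub_of_add_eq hn, ← neg_sub g u]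
    exact sub_mem (nsmul_mem (mem_zmultiples _) 2)
      (nsmul_mem ((zmultiples _).neg_mem (mem_zmultiples _)) n)
  obtain ⟨k, hk⟩ := hK
  have hgv : g ∈ zmultiples (g - u) := by
    simpa using add_mem (hKv k hk) (hKv _ (hS.sub_mem_erase_erase hQ hg hmax hk))
  intro x hx
  obtain rfl | hx := mem_insert.1 hx
  · exact hgv
  by_cases hxu : x = u
  · simpa [hxu] using sub_mem hgv (mem_zmultiples (g - u))
  by_cases hxv : x = g - u
  · exact hxv ▸ mem_zmultiples _
  exact hKv x (mem_erase.2 ⟨hxv, mem_erase.2 ⟨hxu, hx⟩⟩)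

theorem coe_subset_zmultiples (hS : SumOrDiffClosed S) (hQ : Q.PosDef) (hg : g ∈ S)
    (hmax : ∀ y ∈ S, Q y ≤ Q g) {v : M}
    (hv : ∀ x ∈ insert g (upperHalf Q S g), x ∈ zmultiples v) :
    (S : Set M) ⊆ zmultiples v := by
  have hpos : ∀ x ∈ S, 0 < polar Q g x → x ∈ zmultiples v := fun x hx hx0 =>
    hv x (by by_cases hxg : x = g <;> simp [mem_upperHalf, hxg, hx, hx0])
  intro x hx
  rcases (hS.polar_ne_zero hQ hg hmax hx).lt_or_gt with hneg | hpos'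
  · simpa using (zmultiples v).neg_mem
      (hpos (-x) (hS.neg_mem x hx) (by rwa [polar_neg_right, neg_pos]))
  · exact hpos x hx hpos'

theorem three_le_card_upperHalf (hS : SumOrDiffClosed S) (hQ : Q.PosDef) (hg : g ∈ S)
    (hmax : ∀ y ∈ S, Q y ≤ Q g) (hcard : 8 ≤ #S) : 3 ≤ #(upperHalf Q S g) := by
  have hQg := hS.map_pos hQ hg
  have hgmem : g ∈ S.filter fun x => 0 < polar Q g x :=
    mem_filter.2 ⟨hg, by rw [polar_self_eq_two_mul]; linarith⟩
  have := S.card_eq_two_mul_card_filter_pos (polar Q g) hS.neg_mem (polar_neg_right Q g)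
    fun x hx => hS.polar_ne_zero hQ hg hmax hx
  rw [upperHalf, card_erase_of_mem hgmem]
  omega

end UpperHalf

theorem exists_subset_zmultiples (hS : SumOrDiffClosed S) (hQ : Q.PosDef) (hcard : 8 ≤ #S) :
    ∃ v : M, (S : Set M) ⊆ zmultiples v := by
  classical
  obtain ⟨g, hg, hmax⟩ := S.exists_max_image Q (card_pos.1 (by omega))
  have hH := hS.three_le_card_upperHalf hQ hg hmax hcard
  obtain ⟨u, hu, humax⟩ :=
    (upperHalf Q S g).exists_max_image (polar Q g) (card_pos.1 (by omega))
  have hK : (((upperHalf Q S g).erase u).erase (g - u)).Nonempty := by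
    have := pred_card_le_card_erase (s := (upperHalf Q S g).erase u) (a := g - u)
    rw [card_erase_of_mem hu] at this
    exact card_pos.1 (by omega)
  exact ⟨g - u, hS.coe_subset_zmultiples hQ hg hmax
    (hS.insert_upperHalf_subset_zmultiples hQ hg hmax hu humax hK)⟩

end SumOrDiffClosed

/-- If `S` is a finite symmetric generating set of `ℤ²` with `0 ∉ S` and `|S| ≥ 8`,
then there are `g, h ∈ S` with `g ≠ ±h` such that neither `g + h` nor `g - h`
lies in `S`. -/
theorem exists_pair_sum_diff_not_mem (S : Finset (ℤ × ℤ))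
    (hsym : ∀ v ∈ S, -v ∈ S) (h0 : (0 : ℤ × ℤ) ∉ S)
    (hgen : AddSubgroup.closure (S : Set (ℤ × ℤ)) = ⊤) (hcard : 8 ≤ S.card) :
    ∃ g ∈ S, ∃ h ∈ S, g ≠ h ∧ g ≠ -h ∧ g + h ∉ S ∧ g - h ∉ S := by
  by_contra! hcon
  have hS : SumOrDiffClosed S :=
    ⟨hsym, h0, fun x hx y hy hxy hxy' => or_iff_not_imp_left.2 (hcon x hx y hy hxy hxy')⟩
  obtain ⟨v, hv⟩ := hS.exists_subset_zmultiples posDef_sq_prod_sq hcard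
  exact zmultiples_ne_top_int_prod v (top_le_iff.1 (hgen ▸ (closure_le _).2 hv))
end
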